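/- arXiv:1202.3514 — 8 statements merged into one kernel-verified Lean document; each statement's English description precedes it below -/
import Mathlib

section
/- If GF(q)* ∩ C_i^{(N,r)} is nonempty, then its cardinality equals (r-1)/lcm(N, (r-1)/(q-1)), i.e., the same cardinality as GF(q)* ∩ C_0^{(N,r)}. -/
open scoped Classical
open Subgroup

/-- if `GF(q)* ∩ Cᵢ^{(N,r)} ≠ ∅` then its cardinality is
`(r-1)/lcm(N,(r-1)/(q-1))`, the cardinality of `GF(q)* ∩ C₀^{(N,r)}`. -/
theorem stmt2 (p s m N q r i : ℕ) (hp : p.Prime) (hs : 0 < s) (hm : 0 < m)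
    (hq : q = p ^ s) (hr : r = q ^ m)
    (F : Type) [Field F] [Fintype F] (hcard : Fintype.card F = r)
    (hN : N ∣ r - 1)
    (α : Fˣ) (hα : ∀ x : Fˣ, x ∈ Subgroup.zpowers α)
    (hne : ({x : Fˣ | ∃ j : ℕ, x = (α ^ ((r - 1) / (q - 1))) ^ j} ∩
        {x : Fˣ | ∃ j : ℕ, x = α ^ i * (α ^ N) ^ j}).Nonempty) :
    Set.ncard ({x : Fˣ | ∃ j : ℕ, x = (α ^ ((r - 1) / (q - 1))) ^ j} ∩
        {x : Fˣ | ∃ j : ℕ, x = α ^ i * (α ^ N) ^ j}) =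
      (r - 1) / Nat.lcm N ((r - 1) / (q - 1)) := by
  -- arithmetic setup
  have hq2 : 2 ≤ q := by
    subst hq; exact Nat.one_lt_pow hs.ne' hp.one_lt
  have hr2 : 2 ≤ r := by
    subst hr; exact le_trans hq2 (Nat.le_self_pow hm.ne' q)
  set n : ℕ := r - 1 with hn
  have hnpos : 0 < n := by omega
  have hq1n : (q - 1) ∣ n := by
    have := Nat.sub_dvd_pow_sub_pow q 1 m
    rw [one_pow, ← hr] at this; exact this
  set d : ℕ := n / (q - 1) with hd
  have hdn : d ∣ n := ⟨q - 1, by rw [hd, Nat.div_mul_cancel hq1n]⟩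
  have hdpos : 0 < d := Nat.div_pos (Nat.le_of_dvd hnpos hq1n) (by omega)
  have hNpos : 0 < N := Nat.pos_of_dvd_of_pos hN hnpos
  set L : ℕ := Nat.lcm d N with hL
  have hLn : L ∣ n := Nat.lcm_dvd hdn hN
  have hLpos : 0 < L := Nat.pos_of_dvd_of_pos hLn hnpos
  -- order of α
  have hordα : orderOf α = n := by
    rw [orderOf_eq_card_of_forall_mem_zpowers hα, Nat.card_eq_fintype_card,
      Fintype.card_units, hcard]
  -- the sets as subgroup/coset
  set K : Subgroup Fˣ := zpowers (α ^ d) with hK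
  set H : Subgroup Fˣ := zpowers (α ^ N) with hH
  have hS1 : {x : Fˣ | ∃ j : ℕ, x = (α ^ d) ^ j} = (K : Set Fˣ) := by
    ext x
    simp only [Set.mem_setOf_eq, hK, SetLike.mem_coe, ← mem_powers_iff_mem_zpowers,
      Submonoid.mem_powers_iff]
    constructor
    · rintro ⟨j, rfl⟩; exact ⟨j, rfl⟩
    · rintro ⟨j, rfl⟩; exact ⟨j, rfl⟩
  -- key : members of zpowers (α ^ a) have order dividing n / a
  have key : ∀ (a : ℕ), a ∣ n → ∀ x : Fˣ, x ∈ zpowers (α ^ a) → orderOf x ∣ n / a := by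
    intro a ha x hx
    have h := orderOf_dvd_of_mem_zpowers hx
    rwa [orderOf_pow, hordα, Nat.gcd_eq_right ha] at h
  -- K ⊓ H = zpowers (α ^ L)
  have hinf : K ⊓ H = zpowers (α ^ L) := by
    apply le_antisymm
    · intro x hx
      obtain ⟨hxK, hxH⟩ := hx
      have o1 : orderOf x ∣ n / d := key d hdn x hxK
      have o2 : orderOf x ∣ n / N := key N hN x hxH
      have hndn : n / d ∣ n := ⟨d, (Nat.div_mul_cancel hdn).symm⟩
      have hno : orderOf x ∣ n := o1.trans hndn
      have oL : orderOf x ∣ n / L := by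
        rw [Nat.dvd_div_iff_mul_dvd hdn] at o1
        rw [Nat.dvd_div_iff_mul_dvd hN] at o2
        have hd' : d ∣ n / orderOf x := (Nat.dvd_div_iff_mul_dvd hno).mpr
          (by rwa [mul_comm] at o1)
        have hN' : N ∣ n / orderOf x := (Nat.dvd_div_iff_mul_dvd hno).mpr
          (by rwa [mul_comm] at o2)
        have hLd : L ∣ n / orderOf x := Nat.lcm_dvd hd' hN'
        rw [Nat.dvd_div_iff_mul_dvd hno] at hLd
        rw [Nat.dvd_div_iff_mul_dvd hLn]
        rwa [mul_comm] at hLd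
      have hxL : x ^ (n / L) = 1 := orderOf_dvd_iff_pow_eq_one.mp oL
      obtain ⟨z, rfl⟩ := hα x
      have hz : ((orderOf α : ℕ) : ℤ) ∣ z * ((n / L : ℕ) : ℤ) := by
        rw [orderOf_dvd_iff_zpow_eq_one, zpow_mul, zpow_natCast]
        exact hxL
      rw [hordα] at hz
      have hnfact : (n : ℤ) = (L : ℤ) * ((n / L : ℕ) : ℤ) := by
        exact_mod_cast (Nat.mul_div_cancel' hLn).symm
      have hLz : (L : ℤ) ∣ z := by
        have hne0 : ((n / L : ℕ) : ℤ) ≠ 0 := by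
          have : 0 < n / L := Nat.div_pos (Nat.le_of_dvd hnpos hLn) hLpos
          exact_mod_cast this.ne'
        have h2 : (L : ℤ) * ((n / L : ℕ) : ℤ) ∣ z * ((n / L : ℕ) : ℤ) := by
          rwa [← hnfact]
        exact (mul_dvd_mul_iff_right hne0).mp h2
      obtain ⟨w, rfl⟩ := hLz
      refine ⟨w, ?_⟩
      show (α ^ L) ^ w = α ^ ((L : ℤ) * w)
      rw [← zpow_natCast α L, ← zpow_mul]
    · rw [zpowers_le]
      constructor
      · obtain ⟨c, hc⟩ := Nat.dvd_lcm_left d N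
        refine ⟨(c : ℤ), ?_⟩
        show (α ^ d) ^ (c : ℤ) = α ^ L
        rw [zpow_natCast, ← pow_mul, hL, hc]
      · obtain ⟨c, hc⟩ := Nat.dvd_lcm_right d N
        refine ⟨(c : ℤ), ?_⟩
        show (α ^ N) ^ (c : ℤ) = α ^ L
        rw [zpow_natCast, ← pow_mul, hL, hc]
  -- the nonempty witness
  obtain ⟨c, hc1, hc2⟩ := hne
  rw [hS1] at hc1 ⊢
  have hc1' : c ∈ K := hc1
  obtain ⟨j₁, hcj⟩ := hc2
  -- S1 ∩ S2 = c • (K ⊓ H)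
  have hset : ((K : Set Fˣ) ∩ {x : Fˣ | ∃ j : ℕ, x = α ^ i * (α ^ N) ^ j})
      = (fun y => c * y) '' ((K ⊓ H : Subgroup Fˣ) : Set Fˣ) := by
    ext x
    constructor
    · rintro ⟨hxK, j₂, hxj⟩
      have hxK' : x ∈ K := hxK
      have hmemK : c⁻¹ * x ∈ K := mul_mem (inv_mem hc1') hxK'
      have hcx : c⁻¹ * x = (α ^ N) ^ ((j₂ : ℤ) - (j₁ : ℤ)) := by
        rw [hcj, hxj, zpow_sub, ← zpow_natCast (α ^ N) j₂, ← zpow_natCast (α ^ N) j₁]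
        group
      have hmemH : c⁻¹ * x ∈ H := by rw [hcx]; exact zpow_mem (mem_zpowers _) _
      exact ⟨c⁻¹ * x, Subgroup.mem_inf.mpr ⟨hmemK, hmemH⟩, by group⟩
    · rintro ⟨y, ⟨hyK, hyH⟩, rfl⟩
      refine ⟨mul_mem hc1' hyK, ?_⟩
      have hy' : y ∈ Submonoid.powers (α ^ N) := by
        rw [mem_powers_iff_mem_zpowers]; exact hyH
      obtain ⟨j₃, hj₃⟩ := hy'
      have hj₃' : (α ^ N) ^ j₃ = y := hj₃
      exact ⟨j₁ + j₃, by rw [hcj, ← hj₃', pow_add]; exact mul_assoc _ _ _⟩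
  rw [hset, Set.ncard_image_of_injective _ (mul_right_injective c)]
  have hcoe : ((K ⊓ H : Subgroup Fˣ) : Set Fˣ).ncard = Nat.card (K ⊓ H : Subgroup Fˣ) := by
    rw [← Nat.card_coe_set_eq]
    rfl
  rw [hcoe, hinf, Nat.card_zpowers, orderOf_pow, hordα, Nat.gcd_eq_right hLn, hL,
    Nat.lcm_comm]
end

section
/- For β ∈ GF(r)*, the coset βGF(q)* intersects C_i^{(N,r)} nontrivially if and only if i ≡ i(β) (mod N₂), where N₂ = gcd(N, (r-1)/(q-1)) and i(β) is the index with β ∈ C_{i(β)}^{(N,r)}. -/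
open scoped Classical

/-- `β·GF(q)* ∩ Cᵢ^{(N,r)} ≠ ∅ ↔ i ≡ i(β) (mod N₂)`. -/
theorem stmt3 (p s m N q r i : ℕ) (hp : p.Prime) (hs : 0 < s) (hm : 0 < m)
    (hq : q = p ^ s) (hr : r = q ^ m)
    (F : Type) [Field F] [Fintype F] (hcard : Fintype.card F = r)
    (hN : N ∣ r - 1)
    (α : Fˣ) (hα : ∀ x : Fˣ, x ∈ Subgroup.zpowers α)
    (β : Fˣ) (iβ : ℕ) (hiβ : ∃ j : ℕ, β = α ^ iβ * (α ^ N) ^ j) :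
    ({x : Fˣ | ∃ j : ℕ, x = β * (α ^ ((r - 1) / (q - 1))) ^ j} ∩
        {x : Fˣ | ∃ j : ℕ, x = α ^ i * (α ^ N) ^ j}).Nonempty ↔
      i ≡ iβ [MOD Nat.gcd N ((r - 1) / (q - 1))] := by
  obtain ⟨j0, hβ⟩ := hiβ
  set t := (r - 1) / (q - 1) with ht
  set g := Nat.gcd N t with hg
  have hq2 : 1 < q := hq ▸ Nat.one_lt_pow hs.ne' hp.one_lt
  have hr2 : 1 < r := hr ▸ Nat.one_lt_pow hm.ne' hq2
  have hqr : q - 1 ∣ r - 1 := by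
    have := Nat.sub_dvd_pow_sub_pow q 1 m
    simpa [hr] using this
  have htmul : t * (q - 1) = r - 1 := Nat.div_mul_cancel hqr
  have htdvd : t ∣ r - 1 := ⟨q - 1, htmul.symm⟩
  have hgN : g ∣ N := Nat.gcd_dvd_left N t
  have hgt : g ∣ t := Nat.gcd_dvd_right N t
  have hd : orderOf α = r - 1 := by
    rw [orderOf_eq_card_of_forall_mem_zpowers hα, Nat.card_eq_fintype_card,
      Fintype.card_units, hcard]
  have hdpos : 0 < r - 1 := by omega
  -- reduce set statement to an existence statement about exponents
  have hset : ({x : Fˣ | ∃ j : ℕ, x = β * (α ^ t) ^ j} ∩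
      {x : Fˣ | ∃ j : ℕ, x = α ^ i * (α ^ N) ^ j}).Nonempty ↔
      ∃ j k : ℕ, iβ + N * j0 + t * j ≡ i + N * k [MOD r - 1] := by
    subst hβ
    constructor
    · rintro ⟨x, ⟨j, hj⟩, ⟨k, hk⟩⟩
      refine ⟨j, k, ?_⟩
      rw [← hd, ← pow_eq_pow_iff_modEq]
      have : α ^ iβ * (α ^ N) ^ j0 * (α ^ t) ^ j = α ^ i * (α ^ N) ^ k := by
        rw [← hj, ← hk]
      simpa only [← pow_mul, ← pow_add] using this
    · rintro ⟨j, k, hjk⟩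
      refine ⟨α ^ iβ * (α ^ N) ^ j0 * (α ^ t) ^ j, ⟨j, rfl⟩, ⟨k, ?_⟩⟩
      rw [← hd, ← pow_eq_pow_iff_modEq (x := α)] at hjk
      simp only [← pow_mul, ← pow_add] at hjk ⊢
      exact hjk
  rw [hset]
  constructor
  · rintro ⟨j, k, hjk⟩
    have hgd : g ∣ r - 1 := hgN.trans hN
    have h1 : iβ + N * j0 + t * j ≡ i + N * k [MOD g] := hjk.of_dvd hgd
    have hN0 : N ≡ 0 [MOD g] := (Nat.modEq_zero_iff_dvd).mpr hgN
    have ht0 : t ≡ 0 [MOD g] := (Nat.modEq_zero_iff_dvd).mpr hgt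
    have h2 : iβ + 0 * j0 + 0 * j ≡ i + 0 * k [MOD g] :=
      (((Nat.ModEq.refl iβ).add (hN0.mul_right j0)).add (ht0.mul_right j)).symm.trans
        (h1.trans ((Nat.ModEq.refl i).add (hN0.mul_right k)))
    simpa using h2.symm
  · intro h
    have hdvd : (g : ℤ) ∣ (iβ : ℤ) - i := h.dvd
    obtain ⟨c, hc⟩ := hdvd
    set A := Nat.gcdA N t with hA
    set B := Nat.gcdB N t with hB
    have hbez : (g : ℤ) = N * A + t * B := Nat.gcd_eq_gcd_ab N t
    have hi : (i : ℤ) = iβ - (N * A + t * B) * c := by rw [← hbez]; omega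
    have hd0 : ((r : ℤ) - 1) ≠ 0 := by
      have : (1 : ℤ) < r := by exact_mod_cast hr2
      omega
    set d : ℤ := (r : ℤ) - 1 with hdz
    have hdnat : ((r - 1 : ℕ) : ℤ) = d := by push_cast [Nat.cast_sub hr2.le]; ring
    set j : ℕ := ((-B * c) % d).toNat with hj
    set k : ℕ := (((j0 : ℤ) + A * c) % d).toNat with hk
    have hjz : (j : ℤ) ≡ -B * c [ZMOD d] := by
      rw [hj, Int.toNat_of_nonneg (Int.emod_nonneg _ hd0)]
      exact Int.emod_emod_of_dvd _ dvd_rfl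
    have hkz : (k : ℤ) ≡ (j0 : ℤ) + A * c [ZMOD d] := by
      rw [hk, Int.toNat_of_nonneg (Int.emod_nonneg _ hd0)]
      exact Int.emod_emod_of_dvd _ dvd_rfl
    refine ⟨j, k, ?_⟩
    rw [← Int.natCast_modEq_iff]
    push_cast [hdnat]
    calc ((iβ : ℤ) + N * j0 + t * j)
        ≡ (iβ : ℤ) + N * j0 + t * (-B * c) [ZMOD d] := (Int.ModEq.refl _).add (hjz.mul_left t)
      _ = ((iβ : ℤ) - (N * A + t * B) * c) + N * ((j0 : ℤ) + A * c) := by ring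
      _ ≡ ((iβ : ℤ) - (N * A + t * B) * c) + N * k [ZMOD d] :=
          (Int.ModEq.refl _).add (hkz.symm.mul_left _)
      _ = (i : ℤ) + N * k := by rw [← hi]
end

section
/- For β ∈ GF(r)*, if βGF(q)* ∩ C_i^{(N,r)} is nonempty then its cardinality is (r-1)/lcm(N, (r-1)/(q-1)). -/
/-!
Both sets are left cosets in the cyclic group `GF(r)ˣ = ⟨α⟩`: of `⟨α ^ ((r - 1) / (q - 1))⟩` and of
`⟨α ^ N⟩`. Two cosets that meet intersect in a coset of the intersection of the subgroups, and for
divisors `a, b` of the order of `α` we have `⟨α ^ a⟩ ⊓ ⟨α ^ b⟩ = ⟨α ^ lcm a b⟩`, a subgroup of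
order `(r - 1) / lcm a b`.
-/

open Subgroup Pointwise

section Cosets

variable {G : Type*} [Group G]

theorem setOf_eq_mul_pow_eq_smul_zpowers {g : G} (hg : IsOfFinOrder g) (b : G) :
    {x : G | ∃ j : ℕ, x = b * g ^ j} = b • (zpowers g : Set G) := by
  ext x
  rw [mem_leftCoset_iff, SetLike.mem_coe, ← hg.mem_powers_iff_mem_zpowers, Set.mem_ofPred_eq]
  simp only [Submonoid.mem_powers_iff, eq_inv_mul_iff_mul_eq, eq_comm]

theorem smul_inter_smul_eq_smul_inf {H K : Subgroup G} {a b c : G}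
    (ha : c ∈ a • (H : Set G)) (hb : c ∈ b • (K : Set G)) :
    a • (H : Set G) ∩ b • (K : Set G) = c • ((H ⊓ K : Subgroup G) : Set G) := by
  rw [mem_leftCoset_iff, SetLike.mem_coe] at ha hb
  rw [(leftCoset_eq_iff H).mpr ha, (leftCoset_eq_iff K).mpr hb, coe_inf, Set.smul_set_inter]

theorem ncard_smul_inter_smul {H K : Subgroup G} {a b : G}
    (hne : (a • (H : Set G) ∩ b • (K : Set G)).Nonempty) :
    (a • (H : Set G) ∩ b • (K : Set G)).ncard = Nat.card (H ⊓ K : Subgroup G) := by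
  obtain ⟨c, ha, hb⟩ := hne
  rw [smul_inter_smul_eq_smul_inf ha hb, Set.ncard_smul_set]
  exact (Nat.card_coe_set_eq _).symm

end Cosets

section Cyclic

variable {G : Type*} [Group G] {α : G}

theorem zpow_mem_zpowers_pow_iff {a : ℕ} (ha : a ∣ orderOf α) {k : ℤ} :
    α ^ k ∈ zpowers (α ^ a) ↔ (a : ℤ) ∣ k := by
  constructor
  · rintro ⟨t, ht⟩
    have hone : α ^ (k - a * t) = 1 := by
      rw [zpow_sub, zpow_mul, zpow_natCast, ← ht, mul_inv_cancel]
    have hdvd : (a : ℤ) ∣ k - a * t :=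
      (Int.natCast_dvd_natCast.mpr ha).trans (orderOf_dvd_iff_zpow_eq_one.mpr hone)
    simpa using hdvd.add (dvd_mul_right (a : ℤ) t)
  · rintro ⟨t, rfl⟩
    rw [zpow_mul, zpow_natCast]
    exact zpow_mem_zpowers _ t

theorem zpowers_pow_inf_zpowers_pow {a b : ℕ} (ha : a ∣ orderOf α) (hb : b ∣ orderOf α) :
    zpowers (α ^ a) ⊓ zpowers (α ^ b) = zpowers (α ^ Nat.lcm a b) := by
  have hab : Nat.lcm a b ∣ orderOf α := Nat.lcm_dvd ha hb
  ext x
  rw [mem_inf]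
  constructor
  · rintro ⟨⟨t, rfl⟩, hx⟩
    dsimp only at hx ⊢
    rw [← zpow_natCast α a, ← zpow_mul] at hx ⊢
    rw [zpow_mem_zpowers_pow_iff hb, Int.natCast_dvd] at hx
    rw [zpow_mem_zpowers_pow_iff hab, Int.natCast_dvd]
    exact Nat.lcm_dvd (Int.natCast_dvd.mp (dvd_mul_right _ t)) hx
  · rintro ⟨t, rfl⟩
    dsimp only
    rw [← zpow_natCast α (Nat.lcm a b), ← zpow_mul, zpow_mem_zpowers_pow_iff ha,
      zpow_mem_zpowers_pow_iff hb]
    exact ⟨(Int.natCast_dvd_natCast.mpr (Nat.dvd_lcm_left a b)).mul_right t,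
      (Int.natCast_dvd_natCast.mpr (Nat.dvd_lcm_right a b)).mul_right t⟩

end Cyclic

open scoped Classical

theorem stmt4_general (m N q r i : ℕ)
    (hr : r = q ^ m)
    (F : Type) [Field F] [Fintype F] (hcard : Fintype.card F = r)
    (hN : N ∣ r - 1)
    (α : Fˣ) (hα : ∀ x : Fˣ, x ∈ Subgroup.zpowers α)
    (β : Fˣ)
    (hne : ({x : Fˣ | ∃ j : ℕ, x = β * (α ^ ((r - 1) / (q - 1))) ^ j} ∩
        {x : Fˣ | ∃ j : ℕ, x = α ^ i * (α ^ N) ^ j}).Nonempty) :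
    Set.ncard ({x : Fˣ | ∃ j : ℕ, x = β * (α ^ ((r - 1) / (q - 1))) ^ j} ∩
        {x : Fˣ | ∃ j : ℕ, x = α ^ i * (α ^ N) ^ j}) =
      (r - 1) / Nat.lcm N ((r - 1) / (q - 1)) := by
  have horder : orderOf α = r - 1 := by
    rw [orderOf_eq_card_of_forall_mem_zpowers hα, Nat.card_eq_fintype_card, Fintype.card_units,
      hcard]
  have hd : (r - 1) / (q - 1) ∣ orderOf α := by
    rw [horder, hr]
    exact Nat.div_dvd_of_dvd (Nat.sub_one_dvd_pow_sub_one q m)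
  have hN' : N ∣ orderOf α := horder ▸ hN
  have hfin : ∀ g : Fˣ, IsOfFinOrder g := isOfFinOrder_of_finite
  simp only [setOf_eq_mul_pow_eq_smul_zpowers (hfin _)] at hne ⊢
  rw [ncard_smul_inter_smul hne, zpowers_pow_inf_zpowers_pow hd hN', Nat.card_zpowers,
    orderOf_pow, Nat.gcd_eq_right (Nat.lcm_dvd hd hN'), horder, Nat.lcm_comm]

/-- if `β·GF(q)* ∩ Cᵢ^{(N,r)} ≠ ∅` then its cardinality is
`(r-1)/lcm(N,(r-1)/(q-1))`. -/
theorem stmt4 (p s m N q r i : ℕ) (hp : p.Prime) (hs : 0 < s) (hm : 0 < m)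
    (hq : q = p ^ s) (hr : r = q ^ m)
    (F : Type) [Field F] [Fintype F] (hcard : Fintype.card F = r)
    (hN : N ∣ r - 1)
    (α : Fˣ) (hα : ∀ x : Fˣ, x ∈ Subgroup.zpowers α)
    (β : Fˣ)
    (hne : ({x : Fˣ | ∃ j : ℕ, x = β * (α ^ ((r - 1) / (q - 1))) ^ j} ∩
        {x : Fˣ | ∃ j : ℕ, x = α ^ i * (α ^ N) ^ j}).Nonempty) :
    Set.ncard ({x : Fˣ | ∃ j : ℕ, x = β * (α ^ ((r - 1) / (q - 1))) ^ j} ∩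
        {x : Fˣ | ∃ j : ℕ, x = α ^ i * (α ^ N) ^ j}) =
      (r - 1) / Nat.lcm N ((r - 1) / (q - 1)) :=
  stmt4_general m N q r i hr F hcard hN α hα β hne
end

section
/- For every β ∈ GF(r)*, the Hamming weight of the codeword c(β) = (Tr_{r/q}(βθ^j))_{j=0}^{n-1} in the irreducible cyclic code C(r,N) equals ((q-1)/(qN))·(r - 1 - N₂·η_{i(β)}^{(N₂,r)}) = ((q-1)/(qN))·(r - η*_{i(β)}^{(N₂,r)}). -/
open scoped Classical

/-- The Gauss period `η_i^{(N,r)} = Σ_{x ∈ αⁱ·<α^N>} ζ_p^{Tr_{r/p}(x)}`. -/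
noncomputable def gaussPeriod (p : ℕ) (F : Type) [Field F] [Fintype F]
    [Algebra (ZMod p) F] (α : Fˣ) (N i : ℕ) : ℂ :=
  ∑ x ∈ Finset.univ.filter (fun x : Fˣ => ∃ j : ℕ, x = α ^ i * (α ^ N) ^ j),
    Complex.exp (2 * Real.pi * Complex.I *
      ((Algebra.trace (ZMod p) F (x : F)).val : ℂ) / (p : ℂ))

/-- The Hamming weight of the codeword `c(β) = (Tr_{r/q}(βθʲ))_{j=0}^{n-1}`. -/
noncomputable def codewordWeight (K F : Type) [Field K] [Field F] [Algebra K F]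
    (θ : F) (n : ℕ) (β : F) : ℕ :=
  (Finset.univ.filter fun j : Fin n => Algebra.trace K F (β * θ ^ (j : ℕ)) ≠ 0).card

/-!
Let `Z` be the number of zero coordinates of `c(β)` and `ψ = ζ_p^{Tr_{r/p}}`. Orthogonality of
`y ↦ ψ(y x)` over `K` gives `q Z = n + Σ_j Σ_{u ∈ Kˣ} ψ(u β θʲ)`. In the cyclic group `Fˣ = ⟨α⟩`,
`Kˣ = ⟨α^{(r-1)/(q-1)}⟩` and `⟨θ⟩ = ⟨α^N⟩` generate `⟨α^{N₂}⟩`, and the product map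
`Kˣ × ⟨θ⟩ → ⟨α^{N₂}⟩` has fibres of constant size `(q-1) N₂ / N`; so the double sum equals
`(q-1) N₂ / N · η_{i(β)}`, and `wt(c(β)) = n - Z` is the stated value.
-/

open Finset

lemma Fintype.sum_eq_add_sum_units {G₀ M : Type*} [GroupWithZero G₀] [Fintype G₀]
    [AddCommMonoid M] (g : G₀ → M) : ∑ y, g y = g 0 + ∑ u : G₀ˣ, g u := by
  rw [← add_sum_erase univ g (mem_univ 0), sum_subtype _ (p := (· ≠ 0)) (by simp)]
  congr 1
  exact (Fintype.sum_equiv unitsEquivNeZero (fun u : G₀ˣ => g u) (fun y => g y) fun _ => rfl).symm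

section Cyclic

variable {G : Type*} [Group G]

lemma Subgroup.zpowers_pow_sup_zpowers_pow (α : G) (a b : ℕ) :
    Subgroup.zpowers (α ^ a) ⊔ Subgroup.zpowers (α ^ b) =
      Subgroup.zpowers (α ^ Nat.gcd a b) := by
  have hdvd : ∀ {c d : ℕ}, c ∣ d → α ^ d ∈ Subgroup.zpowers (α ^ c) := by
    rintro c _ ⟨k, rfl⟩
    rw [pow_mul]
    exact Subgroup.npow_mem_zpowers _ _
  apply le_antisymm
  · rw [sup_le_iff, Subgroup.zpowers_le, Subgroup.zpowers_le]
    exact ⟨hdvd (Nat.gcd_dvd_left a b), hdvd (Nat.gcd_dvd_right a b)⟩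
  · rw [Subgroup.zpowers_le]
    have hbezout : α ^ Nat.gcd a b = (α ^ a) ^ Nat.gcdA a b * (α ^ b) ^ Nat.gcdB a b := by
      rw [← zpow_natCast α a, ← zpow_natCast α b, ← zpow_mul, ← zpow_mul, ← zpow_add,
        ← Nat.gcd_eq_gcd_ab, zpow_natCast]
    rw [hbezout]
    exact mul_mem (Subgroup.mem_sup_left (Subgroup.zpow_mem_zpowers _ _))
      (Subgroup.mem_sup_right (Subgroup.zpow_mem_zpowers _ _))

lemma Nat.card_zpowers_pow_of_dvd {α : G} {k : ℕ} (hk : k ∣ orderOf α) (hk0 : k ≠ 0) :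
    Nat.card (Subgroup.zpowers (α ^ k)) = orderOf α / k := by
  rw [Nat.card_zpowers, orderOf_pow_of_dvd hk0 hk]

variable [Finite G] {α : G}

lemma Subgroup.eq_zpowers_pow_card_div (hα : ∀ x, x ∈ Subgroup.zpowers α) (H : Subgroup G) :
    H = Subgroup.zpowers (α ^ (Nat.card G / Nat.card H)) := by
  have hord : orderOf α = Nat.card G := orderOf_eq_card_of_forall_mem_zpowers hα
  obtain ⟨e, he⟩ := H.card_subgroup_dvd_card
  have hH0 : Nat.card H ≠ 0 := Nat.card_pos.ne'
  have he0 : e ≠ 0 := right_ne_zero_of_mul (he ▸ (Nat.card_pos (α := G)).ne')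
  rw [he, Nat.mul_div_cancel_left _ (Nat.pos_of_ne_zero hH0)]
  refine Subgroup.eq_of_le_of_card_ge ?_ ?_
  · intro x hx
    obtain ⟨k, rfl⟩ := Subgroup.mem_zpowers_iff.mp (hα x)
    have hpow : (α ^ k) ^ (Nat.card H : ℤ) = 1 := by
      rw [zpow_natCast]
      exact congrArg Subtype.val (pow_card_eq_one' (x := (⟨α ^ k, hx⟩ : H)))
    rw [← zpow_mul, ← orderOf_dvd_iff_zpow_eq_one, hord, he, Nat.cast_mul, mul_comm k] at hpow
    obtain ⟨c, rfl⟩ := (mul_dvd_mul_iff_left (by exact_mod_cast hH0)).mp hpow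
    rw [zpow_mul, zpow_natCast]
    exact Subgroup.zpow_mem_zpowers _ _
  · rw [Nat.card_zpowers_pow_of_dvd (hord ▸ he ▸ dvd_mul_left e _) he0, hord, he,
      Nat.mul_div_cancel _ (Nat.pos_of_ne_zero he0)]

end Cyclic

lemma sum_filter_exists_eq_mul_pow {G M : Type*} [Group G] [Fintype G] [AddCommMonoid M]
    (f : G → M) {a g β : G} (hβ : ∃ j : ℕ, β = a * g ^ j) :
    ∑ x ∈ univ.filter (fun x => ∃ j : ℕ, x = a * g ^ j), f x =
      ∑ d : Subgroup.zpowers g, f (β * d) := by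
  obtain ⟨j₀, rfl⟩ := hβ
  have hmem : ∀ x, (∃ j : ℕ, x = a * g ^ j) ↔ (a * g ^ j₀)⁻¹ * x ∈ Subgroup.zpowers g := by
    intro x
    rw [mul_inv_rev, mul_assoc, Subgroup.mul_mem_cancel_left _
      (inv_mem (Subgroup.npow_mem_zpowers g j₀)), ← mem_powers_iff_mem_zpowers,
      Submonoid.mem_powers_iff]
    simp [eq_inv_mul_iff_mul_eq, eq_comm]
  refine sum_bij' (fun x hx => ⟨_, (hmem x).mp (mem_filter.mp hx).2⟩)
    (fun d _ => a * g ^ j₀ * d) ?_ ?_ ?_ ?_ ?_ <;> simp [hmem, mul_assoc]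

lemma MonoidHom.card_range_nsmul_sum_comp {G H M : Type*} [Group G] [Fintype G] [Group H]
    [AddCommMonoid M] (φ : G →* H) (f : H → M) :
    Nat.card φ.range • ∑ x, f (φ x) = Nat.card G • ∑ y : φ.range, f y := by
  have hmem : ∀ y, y ∈ univ.image φ ↔ y ∈ φ.range := by simp [eq_comm]
  have hfiber : ∀ y ∈ univ.image φ, #{x | φ x = y} = #{x | φ x = 1} := fun y hy =>
    MonoidHom.card_fiber_eq_of_mem_range φ (by simpa using hy) ⟨1, map_one φ⟩
  have hcard : Nat.card G = #(univ.image φ) * #{x | φ x = 1} := by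
    rw [Nat.card_eq_fintype_card, ← card_univ, card_eq_sum_card_image φ, sum_congr rfl hfiber,
      sum_const, smul_eq_mul]
  rw [sum_comp, sum_congr rfl fun y hy => by rw [hfiber y hy], ← smul_sum,
    ← sum_subtype _ hmem, Nat.card_eq_fintype_card, Fintype.card_of_subtype _ hmem, hcard,
    smul_smul, mul_comm]

lemma Subgroup.card_sup_nsmul_sum_sum_mul {G M : Type*} [CommGroup G] [Fintype G]
    [AddCommMonoid M] (A B : Subgroup G) [Fintype A] [Fintype B] (f : G → M) :
    Nat.card ↥(A ⊔ B) • ∑ a : A, ∑ b : B, f (a * b) =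
      (Nat.card A * Nat.card B) • ∑ x : ↥(A ⊔ B), f x := by
  let φ : A × B →* G := A.subtype.coprod B.subtype
  have hrange : φ.range = A ⊔ B := by
    ext x
    simp [φ, Subgroup.mem_sup, MonoidHom.mem_range]
  rw [← hrange, ← Fintype.sum_prod_type', ← Nat.card_prod]
  convert φ.card_range_nsmul_sum_comp f using 3 <;> congr!

section FiniteFieldUnits

variable {K F : Type} [Field K] [Fintype K] [Field F] [Algebra K F]

lemma Nat.card_range_units_map_algebraMap :
    Nat.card (Units.map (algebraMap K F : K →* F)).range = Fintype.card K - 1 := by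
  rw [← Nat.card_eq_fintype_card, ← Nat.card_units]
  exact (Nat.card_congr (MonoidHom.ofInjective (Units.map_injective
    (algebraMap K F).injective)).toEquiv).symm

variable [Fintype F] {α : Fˣ}

lemma orderOf_eq_card_sub_one (hα : ∀ x : Fˣ, x ∈ Subgroup.zpowers α) :
    orderOf α = Fintype.card F - 1 := by
  rw [orderOf_eq_card_of_forall_mem_zpowers hα, Nat.card_units, Nat.card_eq_fintype_card]

lemma range_units_map_algebraMap_sup_zpowers_pow (hα : ∀ x : Fˣ, x ∈ Subgroup.zpowers α)
    (N : ℕ) :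
    (Units.map (algebraMap K F : K →* F)).range ⊔ Subgroup.zpowers (α ^ N) =
      Subgroup.zpowers (α ^ Nat.gcd N ((Fintype.card F - 1) / (Fintype.card K - 1))) := by
  rw [Subgroup.eq_zpowers_pow_card_div hα (Units.map _).range,
    Nat.card_range_units_map_algebraMap, Nat.card_units, Nat.card_eq_fintype_card,
    Subgroup.zpowers_pow_sup_zpowers_pow, Nat.gcd_comm]

end FiniteFieldUnits

noncomputable def traceChar (p : ℕ) [NeZero p] (F : Type) [Field F] [Algebra (ZMod p) F] :
    AddChar F ℂ :=
  ZMod.stdAddChar.compAddMonoidHom (Algebra.trace (ZMod p) F).toAddMonoidHom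

lemma gaussPeriod_eq_sum_traceChar (p : ℕ) [NeZero p] (F : Type) [Field F] [Fintype F]
    [Algebra (ZMod p) F] (α : Fˣ) (N i : ℕ) :
    gaussPeriod p F α N i =
      ∑ x ∈ univ.filter (fun x : Fˣ => ∃ j : ℕ, x = α ^ i * (α ^ N) ^ j), traceChar p F x := by
  simp [gaussPeriod, traceChar, ZMod.stdAddChar_apply, ZMod.toCircle_apply]

section TraceCharacter

variable (p : ℕ) [Fact p.Prime] {K F : Type} [Field K] [Fintype K] [Field F] [Fintype F]
  [Algebra K F] [Algebra (ZMod p) F]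

lemma traceChar_ne_one [Algebra (ZMod p) K] : traceChar p K ≠ 1 := by
  obtain ⟨b, hb⟩ := (Algebra.trace_surjective (ZMod p) K) 1
  intro h
  have := congrArg (fun ψ : AddChar K ℂ => ψ b) h
  simp only [traceChar, AddChar.compAddMonoidHom_apply, LinearMap.toAddMonoidHom_coe, hb,
    AddChar.one_apply] at this
  rw [← AddChar.map_zero_eq_one (ZMod.stdAddChar (N := p)),
    (ZMod.injective_stdAddChar (N := p)).eq_iff] at this
  exact one_ne_zero this

lemma traceChar_algebraMap_mul [Algebra (ZMod p) K] (y : K) (x : F) :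
    traceChar p F (algebraMap K F y * x) = traceChar p K (y * Algebra.trace K F x) := by
  simp only [traceChar, AddChar.compAddMonoidHom_apply, LinearMap.toAddMonoidHom_coe]
  rw [← Algebra.trace_trace (S := K), ← Algebra.smul_def, map_smul, smul_eq_mul]

lemma sum_traceChar_algebraMap_mul (x : F) :
    ∑ y : K, traceChar p F (algebraMap K F y * x) =
      if Algebra.trace K F x = 0 then (Fintype.card K : ℂ) else 0 := by
  have : CharP F p := charP_of_injective_ringHom (algebraMap (ZMod p) F).injective p
  have : CharP K p := RingHom.charP (algebraMap K F) (algebraMap K F).injective p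
  let := ZMod.algebra K p
  simp only [traceChar_algebraMap_mul p]
  exact_mod_cast AddChar.sum_mulShift _ (AddChar.IsPrimitive.of_ne_one (traceChar_ne_one p))

lemma card_mul_card_trace_ne_zero {ι : Type*} [Fintype ι] (x : ι → F) :
    (Fintype.card K : ℂ) * #{i | Algebra.trace K F (x i) ≠ 0} =
      (Fintype.card K - 1) * Fintype.card ι -
        ∑ i, ∑ u : Kˣ, traceChar p F (algebraMap K F u * x i) := by
  have hunits : ∀ i, ∑ y : K, traceChar p F (algebraMap K F y * x i) =
      1 + ∑ u : Kˣ, traceChar p F (algebraMap K F u * x i) := fun i => by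
    rw [Fintype.sum_eq_add_sum_units, map_zero, zero_mul, AddChar.map_zero_eq_one]
  have hzeros : ∑ i, ∑ y : K, traceChar p F (algebraMap K F y * x i) =
      Fintype.card K * #{i | Algebra.trace K F (x i) = 0} := by
    simp_rw [sum_traceChar_algebraMap_mul, sum_ite, sum_const_zero, add_zero, sum_const,
      nsmul_eq_mul, mul_comm]
  have hsplit : (#{i | Algebra.trace K F (x i) ≠ 0} : ℂ) + #{i | Algebra.trace K F (x i) = 0} =
      Fintype.card ι := by
    have := card_filter_add_card_filter_not (s := univ) fun i => Algebra.trace K F (x i) ≠ 0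
    simp only [ne_eq, not_not, card_univ] at this
    exact_mod_cast this
  simp_rw [hunits, sum_add_distrib, sum_const, card_univ, nsmul_one] at hzeros
  linear_combination (Fintype.card K : ℂ) * hsplit + hzeros

lemma card_mul_codewordWeight (θ : Fˣ) (β : F) :
    (Fintype.card K : ℂ) * codewordWeight K F θ (orderOf θ) β =
      (Fintype.card K - 1) * orderOf θ -
        ∑ a : (Units.map (algebraMap K F : K →* F)).range, ∑ b : Subgroup.zpowers θ,
          traceChar p F (β * ((a * b : Fˣ) : F)) := by
  have hinj : Function.Injective (Units.map (algebraMap K F : K →* F)) :=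
    Units.map_injective (algebraMap K F).injective
  rw [codewordWeight, card_mul_card_trace_ne_zero p, Fintype.card_fin, sum_comm]
  congr 1
  refine Fintype.sum_equiv (MonoidHom.ofInjective hinj).toEquiv _ _ fun u => ?_
  refine Fintype.sum_equiv (finEquivZPowers (isOfFinOrder_of_finite θ)) _ _ fun j => ?_
  simp only [finEquivZPowers_apply, Units.val_mul, Units.val_pow_eq_pow_val, mul_left_comm]
  rfl

lemma natCast_mul_sum_sum_traceChar_eq_gaussPeriod {α : Fˣ}
    (hα : ∀ x : Fˣ, x ∈ Subgroup.zpowers α) {N N₂ i : ℕ} (hN : N ∣ Fintype.card F - 1)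
    (hN₂ : N₂ = Nat.gcd N ((Fintype.card F - 1) / (Fintype.card K - 1)))
    {β : Fˣ} (hiβ : ∃ j : ℕ, β = α ^ i * (α ^ N₂) ^ j) :
    (N : ℂ) * ∑ a : (Units.map (algebraMap K F : K →* F)).range,
        ∑ b : Subgroup.zpowers (α ^ N), traceChar p F (β * ((a * b : Fˣ) : F)) =
      (Fintype.card K - 1) * N₂ * gaussPeriod p F α N₂ i := by
  have hord := orderOf_eq_card_sub_one hα
  have hF1 : ((Fintype.card F - 1 : ℕ) : ℂ) ≠ 0 := by
    have := Fintype.one_lt_card (α := F)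
    exact_mod_cast (Nat.sub_pos_of_lt this).ne'
  have hN0 : N ≠ 0 := by rintro rfl; exact hF1 (by rw [Nat.eq_zero_of_zero_dvd hN, Nat.cast_zero])
  have hN₂dvd : N₂ ∣ Fintype.card F - 1 := hN₂ ▸ (Nat.gcd_dvd_left _ _).trans hN
  have hN₂0 : N₂ ≠ 0 := hN₂ ▸ (Nat.gcd_pos_of_pos_left _ (Nat.pos_of_ne_zero hN0)).ne'
  have hcoset := sum_filter_exists_eq_mul_pow (fun x : Fˣ => traceChar p F x) hiβ
  simp only [Units.val_mul] at hcoset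
  have hperiod := Subgroup.card_sup_nsmul_sum_sum_mul (Units.map (algebraMap K F : K →* F)).range
    (Subgroup.zpowers (α ^ N)) fun x => traceChar p F (β * x)
  beta_reduce at hperiod
  rw [range_units_map_algebraMap_sup_zpowers_pow hα, ← hN₂,
    Nat.card_zpowers_pow_of_dvd (hord ▸ hN₂dvd) hN₂0, Nat.card_range_units_map_algebraMap,
    Nat.card_zpowers, orderOf_pow_of_dvd hN0 (hord ▸ hN), hord, ← hcoset,
    ← gaussPeriod_eq_sum_traceChar, nsmul_eq_mul, nsmul_eq_mul, Nat.cast_mul,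
    Nat.cast_pred Fintype.card_pos] at hperiod
  set S := ∑ a : (Units.map (algebraMap K F : K →* F)).range,
    ∑ b : Subgroup.zpowers (α ^ N), traceChar p F (β * ((a * b : Fˣ) : F))
  have hNdiv : (N : ℂ) * ((Fintype.card F - 1) / N : ℕ) = (Fintype.card F - 1 : ℕ) := by
    exact_mod_cast Nat.mul_div_cancel' hN
  have hN₂div : (N₂ : ℂ) * ((Fintype.card F - 1) / N₂ : ℕ) = (Fintype.card F - 1 : ℕ) := by
    exact_mod_cast Nat.mul_div_cancel' hN₂dvd
  refine mul_left_cancel₀ hF1 ?_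
  linear_combination -(N : ℂ) * S * hN₂div + N * N₂ * hperiod +
    N₂ * (Fintype.card K - 1) * gaussPeriod p F α N₂ i * hNdiv

end TraceCharacter

theorem stmt6_general (p N q r n N₂ : ℕ) (hp : p.Prime)
    (hN : N ∣ r - 1) (hn : n = (r - 1) / N)
    (hN₂ : N₂ = Nat.gcd N ((r - 1) / (q - 1)))
    (K F : Type) [Field K] [Fintype K] [Field F] [Fintype F]
    [Algebra K F] [Algebra (ZMod p) F]
    (hcardK : Fintype.card K = q) (hcardF : Fintype.card F = r)
    (α : Fˣ) (hα : ∀ x : Fˣ, x ∈ Subgroup.zpowers α)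
    (β : Fˣ) (iβ : ℕ) (hiβ : ∃ j : ℕ, β = α ^ iβ * (α ^ N₂) ^ j) :
    (codewordWeight K F ((α ^ N : Fˣ) : F) n (β : F) : ℂ) =
        ((q : ℂ) - 1) / ((q : ℂ) * N) *
          ((r : ℂ) - 1 - (N₂ : ℂ) * gaussPeriod p F α N₂ iβ) ∧
      (codewordWeight K F ((α ^ N : Fˣ) : F) n (β : F) : ℂ) =
        ((q : ℂ) - 1) / ((q : ℂ) * N) *
          ((r : ℂ) - (1 + (N₂ : ℂ) * gaussPeriod p F α N₂ iβ)) := by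
  have : Fact p.Prime := ⟨hp⟩
  subst hcardK hcardF
  have hsum := natCast_mul_sum_sum_traceChar_eq_gaussPeriod p hα hN hN₂ hiβ
  have hN0 : N ≠ 0 := by
    rintro rfl
    have := Fintype.one_lt_card (α := F)
    omega
  have hweight := card_mul_codewordWeight p (K := K) (α ^ N) β
  rw [orderOf_pow_of_dvd hN0 (orderOf_eq_card_sub_one hα ▸ hN), orderOf_eq_card_sub_one hα,
    ← hn] at hweight
  have hNn : (N : ℂ) * n = Fintype.card F - 1 := by
    rw [← Nat.cast_pred Fintype.card_pos, hn]
    exact_mod_cast Nat.mul_div_cancel' hN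
  have hqN : (Fintype.card K : ℂ) * N ≠ 0 :=
    mul_ne_zero (Nat.cast_ne_zero.mpr Fintype.card_ne_zero) (Nat.cast_ne_zero.mpr hN0)
  constructor <;> rw [div_mul_eq_mul_div, eq_div_iff hqN] <;>
    linear_combination (N : ℂ) * hweight + (Fintype.card K - 1) * hNn - hsum

/-- `wt(c(β)) = ((q-1)/(qN))·(r-1-N₂·η_{i(β)}^{(N₂,r)})
                           = ((q-1)/(qN))·(r-η*_{i(β)}^{(N₂,r)})`. -/
theorem stmt6 (p s m N q r n N₂ : ℕ) (hp : p.Prime) (hs : 0 < s) (hm : 0 < m)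
    (hq : q = p ^ s) (hr : r = q ^ m) (hN : N ∣ r - 1) (hn : n = (r - 1) / N)
    (hN₂ : N₂ = Nat.gcd N ((r - 1) / (q - 1)))
    (K F : Type) [Field K] [Fintype K] [Field F] [Fintype F]
    [Algebra K F] [Algebra (ZMod p) F]
    (hcardK : Fintype.card K = q) (hcardF : Fintype.card F = r)
    (α : Fˣ) (hα : ∀ x : Fˣ, x ∈ Subgroup.zpowers α)
    (hθ : ∀ x : F, x ∈ Algebra.adjoin K {((α ^ N : Fˣ) : F)})
    (β : Fˣ) (iβ : ℕ) (hiβ : ∃ j : ℕ, β = α ^ iβ * (α ^ N₂) ^ j) :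
    (codewordWeight K F ((α ^ N : Fˣ) : F) n (β : F) : ℂ) =
        ((q : ℂ) - 1) / ((q : ℂ) * N) *
          ((r : ℂ) - 1 - (N₂ : ℂ) * gaussPeriod p F α N₂ iβ) ∧
      (codewordWeight K F ((α ^ N : Fˣ) : F) n (β : F) : ℂ) =
        ((q : ℂ) - 1) / ((q : ℂ) * N) *
          ((r : ℂ) - (1 + (N₂ : ℂ) * gaussPeriod p F α N₂ iβ)) :=
  stmt6_general p N q r n N₂ hp hN hn hN₂ K F hcardK hcardF α hα β iβ hiβ
end

section
/- The Gauss periods η_i^{(N₂,r)} of order N₂ are rational integers, and consequently the reduced period polynomial ψ*_{(N₂,r)}(X) = Π_{i=0}^{N₂-1}(X - η*_i^{(N₂,r)}) splits completely over the rationals. -/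
open scoped Classical

/-!
The prime-field units `𝔽_pˣ` lie in `<α^{N₂}>`: they satisfy `u^{q-1} = 1`, so they are powers
of `α^{(r-1)/(q-1)}`, and `N₂ ∣ (r-1)/(q-1)`. Hence each cyclotomic class `αⁱ<α^{N₂}>` is stable
under scaling by `𝔽_pˣ`, and since the trace is `𝔽_p`-linear, the class meets every nonzero trace
fibre in the same number `c₁` of elements. Grouping the Gauss period by trace values then gives
`η_i = c₀ + c₁ Σ_{a ≠ 0} ζ_p^a = c₀ - c₁ ∈ ℤ`.
-/

open Finset

theorem sum_stdAddChar_eq_sub_of_card_filter_eq {ι : Type*} {n : ℕ} [NeZero n]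
    [Nontrivial (ZMod n)] (S : Finset ι) (g : ι → ZMod n)
    (hg : ∀ a ≠ 0, #{x ∈ S | g x = a} = #{x ∈ S | g x = 1}) :
    ∑ x ∈ S, ZMod.stdAddChar (g x) =
      (#{x ∈ S | g x = 0} : ℂ) - #{x ∈ S | g x = 1} := by
  set c : ZMod n → ℕ := fun a => #{x ∈ S | g x = a}
  have hsum : ∑ a, (ZMod.stdAddChar a : ℂ) = 0 :=
    AddChar.sum_eq_zero_of_ne_one (by
      simpa using ZMod.isPrimitive_stdAddChar n (one_ne_zero : (1 : ZMod n) ≠ 0))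
  have hterm : ∀ a, (c a : ℂ) * ZMod.stdAddChar a =
      c 1 * ZMod.stdAddChar a + if a = 0 then (c 0 : ℂ) - c 1 else 0 := by
    intro a
    split_ifs with ha
    · subst ha; rw [AddChar.map_zero_eq_one]; ring
    · simp only [c, hg a ha, add_zero]
  calc ∑ x ∈ S, ZMod.stdAddChar (g x)
      = ∑ a, (c a : ℂ) * ZMod.stdAddChar a := by
        rw [← sum_fiberwise S g]
        refine sum_congr rfl fun a _ => ?_
        rw [sum_congr rfl fun x hx => by rw [(mem_filter.mp hx).2], sum_const, nsmul_eq_mul]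
    _ = (c 0 : ℂ) - c 1 := by
        simp only [hterm, sum_add_distrib, ← mul_sum, hsum, mul_zero, sum_ite_eq', mem_univ,
          if_true, zero_add]

theorem card_filter_eq_of_units_smul_mem {K ι : Type*} [Field K] [DecidableEq K]
    [MulAction Kˣ ι]
    (S : Finset ι) (g : ι → K) (hg : ∀ (t : Kˣ) x, g (t • x) = t * g x)
    (hS : ∀ (t : Kˣ), ∀ x ∈ S, t • x ∈ S) {a b : K} (ha : a ≠ 0) (hb : b ≠ 0) :
    #{x ∈ S | g x = a} = #{x ∈ S | g x = b} := by
  have hmaps : ∀ (t : Kˣ) {a b : K}, t * a = b →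
      Set.MapsTo (t • ·) (({x ∈ S | g x = a} : Finset ι) : Set ι)
        ({x ∈ S | g x = b} : Finset ι) := by
    intro t a b hab x hx
    simp only [coe_filter, Set.mem_ofPred_eq] at hx ⊢
    exact ⟨hS t x hx.1, by rw [hg, hx.2, hab]⟩
  set t : Kˣ := Units.mk0 (b / a) (div_ne_zero hb ha)
  exact card_nbij' (t • ·) (t⁻¹ • ·)
    (hmaps t (by simp [t, div_mul_cancel₀ b ha]))
    (hmaps t⁻¹ (by simp [t, inv_div, div_mul_cancel₀ a hb]))
    (fun x _ => inv_smul_smul t x) (fun x _ => smul_inv_smul t x)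

theorem mem_powers_pow_of_pow_eq_one {G : Type*} [Group G] [Finite G] {α u : G}
    (hu : u ∈ Subgroup.zpowers α) {a d N : ℕ} (hord : orderOf α = a * d) (ha : 0 < a)
    (hN : N ∣ d) (hua : u ^ a = 1) : u ∈ Submonoid.powers (α ^ N) := by
  obtain ⟨k, rfl⟩ := mem_powers_iff_mem_zpowers.mpr hu
  have hdk : d ∣ k := by
    have : a * d ∣ a * k := by
      rw [← hord, mul_comm a k]
      exact orderOf_dvd_of_pow_eq_one (by rwa [pow_mul])
    exact Nat.dvd_of_mul_dvd_mul_left ha this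
  obtain ⟨e, rfl⟩ := hN.trans hdk
  exact ⟨e, (pow_mul α N e).symm⟩

section GaussPeriod

variable {p : ℕ} [Fact p.Prime] {F : Type} [Field F] [Fintype F] [Algebra (ZMod p) F]

theorem gaussPeriod_eq_sum_stdAddChar (α : Fˣ) (N i : ℕ) :
    gaussPeriod p F α N i =
      ∑ x ∈ univ.filter (fun x : Fˣ => ∃ j : ℕ, x = α ^ i * (α ^ N) ^ j),
        ZMod.stdAddChar (Algebra.trace (ZMod p) F (x : F)) := by
  simp only [gaussPeriod, ZMod.stdAddChar_apply, ZMod.toCircle_apply]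

theorem exists_gaussPeriod_eq_intCast {α : Fˣ} {N : ℕ}
    (hunits : ∀ t : (ZMod p)ˣ,
      Units.map (algebraMap (ZMod p) F).toMonoidHom t ∈ Submonoid.powers (α ^ N))
    (i : ℕ) : ∃ z : ℤ, gaussPeriod p F α N i = z := by
  set S := univ.filter (fun x : Fˣ => ∃ j : ℕ, x = α ^ i * (α ^ N) ^ j)
  have hS : ∀ (t : (ZMod p)ˣ), ∀ x ∈ S, t • x ∈ S := by
    intro t x hx
    obtain ⟨e, he⟩ := hunits t
    obtain ⟨j, rfl⟩ := (mem_filter.mp hx).2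
    have hsmul : t • (α ^ i * (α ^ N) ^ j) =
        Units.map (algebraMap (ZMod p) F).toMonoidHom t * (α ^ i * (α ^ N) ^ j) :=
      Units.ext (Algebra.smul_def _ _)
    simp only [S, mem_filter, mem_univ, true_and]
    exact ⟨e + j, by rw [hsmul, ← he, pow_add, mul_left_comm]⟩
  set tr : Fˣ → ZMod p := fun x => Algebra.trace (ZMod p) F x
  have htrace : ∀ (t : (ZMod p)ˣ) x, tr (t • x) = t * tr x :=
    fun t x => (Algebra.trace (ZMod p) F).map_smul (t : ZMod p) (x : F)
  have hfibre := fun (a : ZMod p) (ha : a ≠ 0) =>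
    card_filter_eq_of_units_smul_mem S tr htrace hS ha one_ne_zero
  refine ⟨(#{x ∈ S | tr x = 0} : ℕ) - (#{x ∈ S | tr x = 1} : ℕ), ?_⟩
  rw [gaussPeriod_eq_sum_stdAddChar, sum_stdAddChar_eq_sub_of_card_filter_eq S tr hfibre]
  push_cast
  rfl

end GaussPeriod

theorem exists_map_eq_prod_X_sub_C_and_splits {ι K : Type*} [Field K] [CharZero K]
    (s : Finset ι) (f : ι → K) (hf : ∀ i, ∃ w : ℚ, (w : K) = f i) :
    ∃ ψ : Polynomial ℚ, ψ.map (algebraMap ℚ K) = ∏ i ∈ s, (Polynomial.X - Polynomial.C (f i)) ∧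
      ψ.Splits := by
  choose w hw using hf
  refine ⟨∏ i ∈ s, (Polynomial.X - Polynomial.C (w i)), ?_,
    Polynomial.Splits.prod fun i _ => Polynomial.Splits.X_sub_C _⟩
  simp [Polynomial.map_prod, hw]

theorem stmt8_general (p s m N q r N₂ : ℕ) (hp : p.Prime) (hs : 0 < s)
    (hq : q = p ^ s) (hr : r = q ^ m)
    (hN₂ : N₂ = Nat.gcd N ((r - 1) / (q - 1)))
    (F : Type) [Field F] [Fintype F] [Algebra (ZMod p) F]
    (hcardF : Fintype.card F = r)
    (α : Fˣ) (hα : ∀ x : Fˣ, x ∈ Subgroup.zpowers α) :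
    (∀ i : ℕ, ∃ z : ℤ, gaussPeriod p F α N₂ i = (z : ℂ)) ∧
      ∃ ψ : Polynomial ℚ,
        ψ.map (algebraMap ℚ ℂ) =
          ∏ i ∈ Finset.range N₂,
            (Polynomial.X -
              Polynomial.C (1 + (N₂ : ℂ) * gaussPeriod p F α N₂ i)) ∧
        Polynomial.Splits ψ := by
  have : Fact p.Prime := ⟨hp⟩
  have hq1 : 0 < q - 1 := by
    have := Nat.one_lt_pow hs.ne' hp.one_lt
    omega
  have hord : orderOf α = (q - 1) * ((r - 1) / (q - 1)) := by
    rw [orderOf_eq_card_of_forall_mem_zpowers hα, Nat.card_eq_fintype_card, Fintype.card_units,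
      hcardF, Nat.mul_div_cancel']
    simpa [hr] using Nat.sub_dvd_pow_sub_pow q 1 m
  have hpq : p - 1 ∣ q - 1 := by simpa [hq] using Nat.sub_dvd_pow_sub_pow p 1 s
  have hunits : ∀ t : (ZMod p)ˣ,
      Units.map (algebraMap (ZMod p) F).toMonoidHom t ∈ Submonoid.powers (α ^ N₂) := by
    intro t
    refine mem_powers_pow_of_pow_eq_one (hα _) hord hq1 (hN₂ ▸ Nat.gcd_dvd_right _ _) ?_
    obtain ⟨k, hk⟩ := hpq
    rw [← map_pow, hk, pow_mul, ZMod.units_pow_card_sub_one_eq_one, one_pow, map_one]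
  have hint := exists_gaussPeriod_eq_intCast hunits
  refine ⟨hint, exists_map_eq_prod_X_sub_C_and_splits _ _ fun i => ?_⟩
  obtain ⟨z, hz⟩ := hint i
  exact ⟨1 + N₂ * z, by rw [hz]; push_cast; rfl⟩

/-- the Gauss periods `η_i^{(N₂,r)}` are rational integers and the
reduced period polynomial `ψ*_{(N₂,r)}(X) = ∏_{i<N₂}(X - (1 + N₂η_i^{(N₂,r)}))`
comes from a polynomial over `ℚ` that splits completely over `ℚ`. -/
theorem stmt8 (p s m N q r N₂ : ℕ) (hp : p.Prime) (hs : 0 < s) (hm : 0 < m)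
    (hq : q = p ^ s) (hr : r = q ^ m) (hN : N ∣ r - 1)
    (hN₂ : N₂ = Nat.gcd N ((r - 1) / (q - 1)))
    (F : Type) [Field F] [Fintype F] [Algebra (ZMod p) F]
    (hcardF : Fintype.card F = r)
    (α : Fˣ) (hα : ∀ x : Fˣ, x ∈ Subgroup.zpowers α) :
    (∀ i : ℕ, ∃ z : ℤ, gaussPeriod p F α N₂ i = (z : ℂ)) ∧
      ∃ ψ : Polynomial ℚ,
        ψ.map (algebraMap ℚ ℂ) =
          ∏ i ∈ Finset.range N₂,
            (Polynomial.X -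
              Polynomial.C (1 + (N₂ : ℂ) * gaussPeriod p F α N₂ i)) ∧
        Polynomial.Splits ψ :=
  stmt8_general p s m N q r N₂ hp hs hq hr hN₂ F hcardF α hα
end

section
/- The irreducible cyclic code C(r,N) has exactly one nonzero weight if and only if N₂ = gcd(N, (r-1)/(q-1)) = 1. -/
/-!
Write `H = ⟨θ⟩ ≤ F^×` and let `z(β)` be the number of zero coordinates of `c(β)`, so that the
code has one nonzero weight iff `z` is constant on `F^×`. Both moments of `z` are computable:
`Σ_β z(β)² = |H| Σ_{g ∈ H} #{β ≠ 0 : Tr β = Tr(gβ) = 0}`, and this count is `r/q - 1` or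
`r/q² - 1` according as `g` lies in `K` or not, since the trace form is nondegenerate. Hence
`q² ((r-1) Σ z² - (Σ z)²) = |H| r (q-1) (|H ∩ K^×| (r-1) - |H| (q-1))`, and by Cauchy–Schwarz
`z` is constant iff `|H ∩ K^×| (r-1) = |H| (q-1)`. In the cyclic group `H` of order `n`,
`|H ∩ K^×| = gcd(n, q-1)`, and the last condition becomes `gcd(N, (r-1)/(q-1)) = 1`.
-/

open scoped Classical

open Finset Module

theorem Finset.sum_sum_sub_sq {ι R : Type*} [CommRing R] (s : Finset ι) (f : ι → R) :
    ∑ i ∈ s, ∑ j ∈ s, (f i - f j) ^ 2 = 2 * (#s * ∑ i ∈ s, f i ^ 2 - (∑ i ∈ s, f i) ^ 2) := by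
  simp only [sub_sq, sum_add_distrib, sum_sub_distrib, sum_const, nsmul_eq_mul, ← mul_sum,
    ← sum_mul]
  ring

theorem Finset.card_mul_sum_sq_eq_sq_sum_iff {ι R : Type*} [CommRing R] [LinearOrder R]
    [IsStrictOrderedRing R] (s : Finset ι) (f : ι → R) :
    #s * ∑ i ∈ s, f i ^ 2 = (∑ i ∈ s, f i) ^ 2 ↔ ∀ i ∈ s, ∀ j ∈ s, f i = f j := by
  have hnonneg : ∀ i ∈ s, 0 ≤ ∑ j ∈ s, (f i - f j) ^ 2 := fun i _ =>
    sum_nonneg fun j _ => sq_nonneg _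
  rw [← sub_eq_zero, ← mul_eq_zero_iff_left (two_ne_zero' R), ← sum_sum_sub_sq,
    sum_eq_zero_iff_of_nonneg hnonneg]
  refine forall₂_congr fun i _ => ?_
  rw [sum_eq_zero_iff_of_nonneg fun j _ => sq_nonneg _]
  simp only [sq_eq_zero_iff, sub_eq_zero]

theorem Set.ncard_setOf_exists_eq_eq_one_iff {ι α : Type*} [Nonempty ι] (f : ι → α) :
    {a | ∃ i, a = f i}.ncard = 1 ↔ ∀ i j, f i = f j := by
  have hrange : {a | ∃ i, a = f i} = Set.range f := by
    ext a; exact exists_congr fun i => eq_comm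
  rw [hrange, Set.ncard_eq_one]
  constructor
  · rintro ⟨a, ha⟩ i j
    rw [Set.range_eq_singleton_iff.mp ha i, Set.range_eq_singleton_iff.mp ha j]
  · intro h
    obtain ⟨i⟩ := ‹Nonempty ι›
    exact ⟨f i, Set.range_eq_singleton_iff.mpr fun j => h j i⟩

theorem Finset.card_filter_units_add_one {M₀ : Type*} [GroupWithZero M₀] [Fintype M₀]
    (P : M₀ → Prop) [DecidablePred P] (h0 : P 0) : #{u : M₀ˣ | P u} + 1 = #{x | P x} := by
  set ι : M₀ˣ ↪ M₀ := ⟨Units.val, Units.val_injective⟩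
  have h0mem : (0 : M₀) ∉ (univ.filter fun u : M₀ˣ => P u).map ι := by simp [ι]
  rw [← card_map ι, ← card_insert_of_notMem h0mem]
  congr 1
  ext x
  by_cases hx : x = 0
  · simp [hx, h0]
  · simp only [mem_insert, hx, mem_map, mem_filter_univ, false_or, ι,
      Function.Embedding.coeFn_mk]
    exact ⟨fun ⟨u, hu, hux⟩ => hux ▸ hu, fun hPx => ⟨Units.mk0 x hx, hPx, rfl⟩⟩

theorem Nat.gcd_mul_mul_eq_mul_iff {n N k d : ℕ} (hn : 0 < n) (hk : 0 < k) (h : n * N = d * k) :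
    n.gcd k * (n * N) = n * k ↔ N.gcd d = 1 := by
  have hgcd : n.gcd k * N = d.gcd N * k := by
    rw [← Nat.gcd_mul_right, h, mul_comm k N, Nat.gcd_mul_right]
  rw [← mul_assoc, mul_comm _ n, mul_assoc, Nat.mul_right_inj hn.ne', hgcd, Nat.gcd_comm,
    Nat.mul_eq_right hk.ne']

section TraceForm

variable {K F : Type*} [Field K] [Field F] [Algebra K F]

theorem FiniteField.mem_range_algebraMap_iff_pow_card_eq [Fintype K] (x : F) :
    x ∈ Set.range (algebraMap K F) ↔ x ^ Fintype.card K = x := by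
  refine ⟨fun ⟨u, hu⟩ => hu ▸ by rw [← map_pow, FiniteField.pow_card], fun hx => ?_⟩
  have hq : 1 < Fintype.card K := Fintype.one_lt_card
  have hsplits : (Polynomial.X ^ Fintype.card K - Polynomial.X : Polynomial K).Splits := by
    rw [Polynomial.splits_iff_card_roots, FiniteField.roots_X_pow_card_sub_X,
      FiniteField.X_pow_card_sub_X_natDegree_eq K hq]
    rfl
  exact hsplits.mem_range_of_isRoot (FiniteField.X_pow_card_sub_X_ne_zero K hq) (by simp [hx])

theorem card_traceOrthogonal_mul_pow_finrank [Fintype K] [Fintype F] (W : Submodule K F) :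
    Fintype.card ((Algebra.traceForm K F).orthogonal W) * Fintype.card K ^ finrank K W
      = Fintype.card F := by
  rw [Module.card_eq_pow_finrank (K := K) (V := F), Module.card_eq_pow_finrank (K := K),
    ← pow_add, LinearMap.BilinForm.finrank_orthogonal (traceForm_nondegenerate K F),
    Nat.sub_add_cancel W.finrank_le]

theorem mem_traceOrthogonal_span_one_pair_iff (g x : F) :
    x ∈ (Algebra.traceForm K F).orthogonal (Submodule.span K {1, g})
      ↔ Algebra.trace K F x = 0 ∧ Algebra.trace K F (g * x) = 0 := by
  simp only [LinearMap.BilinForm.mem_orthogonal_iff, Submodule.mem_span_pair,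
    Algebra.traceForm_apply]
  constructor
  · intro h
    exact ⟨by simpa using h 1 ⟨1, 0, by simp⟩, h g ⟨0, 1, by simp⟩⟩
  · rintro ⟨h1, hg⟩ _ ⟨a, b, rfl⟩
    simp [add_mul, h1, hg]

theorem finrank_span_one_pair_of_mem {g : F} (hg : g ∈ Set.range (algebraMap K F)) :
    finrank K (Submodule.span K {1, g}) = 1 := by
  obtain ⟨u, rfl⟩ := hg
  have hu : algebraMap K F u ∈ K ∙ (1 : F) := by
    rw [Algebra.algebraMap_eq_smul_one]
    exact Submodule.smul_mem _ _ (Submodule.mem_span_singleton_self 1)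
  rw [Set.pair_comm, Submodule.span_insert_eq_span hu, finrank_span_singleton one_ne_zero]

theorem finrank_span_one_pair_of_notMem {g : F} (hg : g ∉ Set.range (algebraMap K F)) :
    finrank K (Submodule.span K {1, g}) = 2 := by
  have hindep : LinearIndependent K ![1, g] := by
    refine LinearIndependent.pair_iff.mpr fun s t hst => ?_
    have ht : t = 0 := by
      by_contra ht
      refine hg ⟨-(s / t), smul_right_injective F ht ?_⟩
      dsimp only
      rw [Algebra.smul_def t, ← map_mul, mul_neg, mul_div_cancel₀ _ ht, map_neg,
        Algebra.algebraMap_eq_smul_one, neg_eq_iff_add_eq_zero]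
      exact hst
    subst ht
    simpa using hst
  rw [← Matrix.range_cons_cons_empty, finrank_span_eq_card hindep, Fintype.card_fin]

end TraceForm

section ZeroCounts

variable {K F : Type*} [Field K] [Field F] [Fintype F] [Algebra K F]

variable (K) in
noncomputable def traceZeroPairCount (g : F) : ℕ :=
  #{β : Fˣ | Algebra.trace K F β = 0 ∧ Algebra.trace K F (g * β) = 0}

variable (K) in
noncomputable def traceZeroCount (H : Subgroup Fˣ) (β : F) : ℕ :=
  #{h : H | Algebra.trace K F (β * ((h : Fˣ) : F)) = 0}

theorem traceZeroPairCount_add_one_mul_pow_finrank [Fintype K] (g : F) :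
    (traceZeroPairCount K g + 1) * Fintype.card K ^ finrank K (Submodule.span K {1, g})
      = Fintype.card F := by
  rw [traceZeroPairCount,
    card_filter_units_add_one (fun x : F => Algebra.trace K F x = 0 ∧ Algebra.trace K F (g * x) = 0)
      (by simp),
    ← card_traceOrthogonal_mul_pow_finrank (Submodule.span K {1, g}), Fintype.card_subtype]
  simp only [mem_traceOrthogonal_span_one_pair_iff]

theorem card_units_trace_mul_eq_zero_and (h h' : Fˣ) :
    #{β : Fˣ | Algebra.trace K F (β * h) = 0 ∧ Algebra.trace K F (β * h') = 0}
      = traceZeroPairCount K ((h' * h⁻¹ : Fˣ) : F) := by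
  refine card_equiv (Equiv.mulRight h) fun β => ?_
  have hcomm : (h' : F) * (h : F)⁻¹ * (β * h) = β * h' := by field_simp
  simp [hcomm]

theorem sum_traceZeroCount (H : Subgroup Fˣ) :
    ∑ β : Fˣ, traceZeroCount K H β = Fintype.card H * traceZeroPairCount K (1 : F) := by
  simp only [traceZeroCount, card_filter]
  rw [sum_comm]
  refine (sum_congr rfl fun h _ => ?_).trans (by rw [sum_const, card_univ, smul_eq_mul])
  rw [← card_filter, ← Units.val_one, ← mul_inv_cancel (h : Fˣ),
    ← card_units_trace_mul_eq_zero_and, filter_congr fun β _ => and_self_iff.symm]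

theorem sum_traceZeroCount_sq (H : Subgroup Fˣ) :
    ∑ β : Fˣ, traceZeroCount K H β ^ 2
      = Fintype.card H * ∑ g : H, traceZeroPairCount K ((g : Fˣ) : F) := by
  simp only [traceZeroCount, card_filter, sq, sum_mul_sum, ite_zero_mul_ite_zero, mul_one]
  rw [sum_comm]
  refine (sum_congr rfl fun h _ => ?_).trans (by rw [sum_const, card_univ, smul_eq_mul])
  rw [sum_comm]
  simp only [← card_filter, card_units_trace_mul_eq_zero_and]
  exact Equiv.sum_comp (Equiv.mulRight h⁻¹) fun g : H => traceZeroPairCount K ((g : Fˣ) : F)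

end ZeroCounts

section Moments

variable {K F : Type*} [Field K] [Fintype K] [Field F] [Fintype F] [Algebra K F]

theorem traceZeroPairCount_one_add_one_mul :
    (traceZeroPairCount K (1 : F) + 1) * Fintype.card K = Fintype.card F := by
  have hcount := traceZeroPairCount_add_one_mul_pow_finrank (K := K) (1 : F)
  rwa [finrank_span_one_pair_of_mem ⟨(1 : K), map_one _⟩, pow_one] at hcount

theorem sq_card_mul_sum_traceZeroPairCount_add_one (H : Subgroup Fˣ) :
    Fintype.card K ^ 2 * ∑ g : H, (traceZeroPairCount K ((g : Fˣ) : F) + 1)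
      = Fintype.card F * (Fintype.card H
          + Fintype.card Kˣ * #{g : H | ((g : Fˣ) : F) ∈ Set.range (algebraMap K F)}) := by
  have hterm : ∀ g : F, Fintype.card K ^ 2 * (traceZeroPairCount K g + 1)
      = Fintype.card F
        + if g ∈ Set.range (algebraMap K F) then Fintype.card Kˣ * Fintype.card F else 0 := by
    intro g
    have hcount := traceZeroPairCount_add_one_mul_pow_finrank (K := K) g
    split_ifs with hg
    · rw [finrank_span_one_pair_of_mem hg, pow_one] at hcount
      rw [← hcount, Fintype.card_eq_card_units_add_one (α := K)]; ring
    · rw [finrank_span_one_pair_of_notMem hg] at hcount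
      rw [← hcount]; ring
  rw [mul_sum, sum_congr rfl fun g _ => hterm _, sum_add_distrib, sum_const, card_univ,
    ← sum_filter, sum_const, smul_eq_mul, smul_eq_mul]
  ring

theorem traceZeroCount_moments (H : Subgroup Fˣ) :
    (Fintype.card K : ℤ) ^ 2 * (Fintype.card Fˣ * ∑ β : Fˣ, (traceZeroCount K H β : ℤ) ^ 2
        - (∑ β : Fˣ, (traceZeroCount K H β : ℤ)) ^ 2)
      = Fintype.card H * Fintype.card F * Fintype.card Kˣ
        * (#{g : H | ((g : Fˣ) : F) ∈ Set.range (algebraMap K F)} * Fintype.card Fˣ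
          - Fintype.card H * Fintype.card Kˣ) := by
  have hsum := congrArg (Nat.cast : ℕ → ℤ) (sum_traceZeroCount (K := K) H)
  have hsumSq := congrArg (Nat.cast : ℕ → ℤ) (sum_traceZeroCount_sq (K := K) H)
  have hone := congrArg (Nat.cast : ℕ → ℤ) (traceZeroPairCount_one_add_one_mul (K := K) (F := F))
  have hpairs := congrArg (Nat.cast : ℕ → ℤ) (sq_card_mul_sum_traceZeroPairCount_add_one (K := K) H)
  have hunitsF := congrArg (Nat.cast : ℕ → ℤ) (Fintype.card_eq_card_units_add_one (α := F))
  have hunitsK := congrArg (Nat.cast : ℕ → ℤ) (Fintype.card_eq_card_units_add_one (α := K))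
  push_cast [sum_add_distrib, sum_const, card_univ, nsmul_eq_mul, mul_one]
    at hsum hsumSq hone hpairs hunitsF hunitsK
  rw [hsum, hsumSq]
  linear_combination (Fintype.card Fˣ * Fintype.card H : ℤ) * hpairs
    - (Fintype.card H : ℤ) ^ 2 * (Fintype.card K * traceZeroPairCount K (1 : F)
      + Fintype.card F - Fintype.card K) * hone
    - (Fintype.card H : ℤ) ^ 2 * (Fintype.card F - Fintype.card K ^ 2) * hunitsF
    - (Fintype.card H : ℤ) ^ 2 * Fintype.card F * (Fintype.card Kˣ + Fintype.card K - 1) * hunitsK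

end Moments

section Subgroups

variable {K F : Type*} [Field K] [Fintype K] [Field F] [Fintype F] [Algebra K F]

theorem traceZeroCount_const_iff (H : Subgroup Fˣ) :
    (∀ β γ : Fˣ, traceZeroCount K H β = traceZeroCount K H γ)
      ↔ #{g : H | ((g : Fˣ) : F) ∈ Set.range (algebraMap K F)} * Fintype.card Fˣ
        = Fintype.card H * Fintype.card Kˣ := by
  have hpos : (0 : ℤ) < Fintype.card H * Fintype.card F * Fintype.card Kˣ := by
    have := Fintype.card_pos (α := H)
    have := Fintype.card_pos (α := F)
    have := Fintype.card_pos (α := Kˣ)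
    positivity
  have hq : (Fintype.card K : ℤ) ^ 2 ≠ 0 := by
    have := Fintype.card_pos (α := K)
    positivity
  have hvar := card_mul_sum_sq_eq_sq_sum_iff univ fun β : Fˣ => (traceZeroCount K H β : ℤ)
  rw [card_univ, ← sub_eq_zero, ← mul_right_inj' hq, mul_zero, traceZeroCount_moments,
    mul_eq_zero, or_iff_right hpos.ne', sub_eq_zero] at hvar
  simp only [mem_univ, forall_const, Nat.cast_inj] at hvar
  exact_mod_cast hvar.symm

theorem card_filter_mem_range_algebraMap (H : Subgroup Fˣ) [IsCyclic H] :
    #{g : H | ((g : Fˣ) : F) ∈ Set.range (algebraMap K F)}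
      = (Fintype.card H).gcd (Fintype.card Kˣ) := by
  have hmem : ∀ g : H, ((g : Fˣ) : F) ∈ Set.range (algebraMap K F) ↔
      g ∈ (powMonoidHom (Fintype.card Kˣ) : H →* H).ker := by
    intro g
    rw [FiniteField.mem_range_algebraMap_iff_pow_card_eq,
      Fintype.card_eq_card_units_add_one (α := K), pow_succ,
      mul_eq_right₀ (Units.ne_zero _), MonoidHom.mem_ker, powMonoidHom_apply,
      ← Units.val_pow_eq_pow_val, Units.val_eq_one, ← Subgroup.coe_pow, OneMemClass.coe_eq_one]
  rw [← Nat.card_eq_fintype_card, ← IsCyclic.card_powMonoidHom_ker, ← Fintype.card_subtype,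
    Nat.card_eq_fintype_card]
  exact Fintype.card_congr (Equiv.subtypeEquivRight hmem)

end Subgroups

theorem orderOf_pow_of_forall_mem_zpowers {G : Type*} [Group G] [Finite G] {α : G}
    (hα : ∀ x, x ∈ Subgroup.zpowers α) {N : ℕ} (hN : N ∣ Nat.card G) :
    orderOf (α ^ N) = Nat.card G / N := by
  have hN0 : N ≠ 0 := by
    rintro rfl
    exact Nat.card_pos.ne' (zero_dvd_iff.mp hN)
  rw [orderOf_pow_of_dvd hN0 (orderOf_eq_card_of_forall_mem_zpowers hα ▸ hN),
    orderOf_eq_card_of_forall_mem_zpowers hα]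

theorem codewordWeight_add_traceZeroCount {K F : Type} [Field K] [Field F] [Fintype F]
    [Algebra K F] (θ : Fˣ) (β : F) :
    codewordWeight K F θ (orderOf θ) β + traceZeroCount K (Subgroup.zpowers θ) β = orderOf θ := by
  have hweight : codewordWeight K F θ (orderOf θ) β
      = #{h : Subgroup.zpowers θ | Algebra.trace K F (β * ((h : Fˣ) : F)) ≠ 0} :=
    card_equiv (finEquivZPowers (isOfFinOrder_of_finite θ)) fun j => by
      simp [finEquivZPowers_apply, Units.val_pow_eq_pow_val]
  rw [hweight, traceZeroCount, add_comm, card_filter_add_card_filter_not, card_univ,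
    Fintype.card_zpowers]

theorem codewordWeight_const_iff {K F : Type} [Field K] [Field F] [Fintype F] [Algebra K F]
    (θ : Fˣ) :
    (∀ β γ : Fˣ, codewordWeight K F θ (orderOf θ) β = codewordWeight K F θ (orderOf θ) γ)
      ↔ ∀ β γ : Fˣ, traceZeroCount K (Subgroup.zpowers θ) β
        = traceZeroCount K (Subgroup.zpowers θ) γ := by
  refine forall₂_congr fun β γ => ?_
  have hβ := codewordWeight_add_traceZeroCount (K := K) θ β
  have hγ := codewordWeight_add_traceZeroCount (K := K) θ γ
  omega

theorem stmt9_general (N q r n : ℕ) (hN : N ∣ r - 1) (hn : n = (r - 1) / N)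
    (K F : Type) [Field K] [Fintype K] [Field F] [Fintype F] [Algebra K F]
    (hcardK : Fintype.card K = q) (hcardF : Fintype.card F = r)
    (α : Fˣ) (hα : ∀ x : Fˣ, x ∈ Subgroup.zpowers α) :
    Set.ncard {w : ℕ | ∃ β : Fˣ,
        w = codewordWeight K F ((α ^ N : Fˣ) : F) n (β : F)} = 1 ↔
      Nat.gcd N ((r - 1) / (q - 1)) = 1 := by
  have hunitsF : Nat.card Fˣ = r - 1 := by
    rw [Nat.card_eq_fintype_card, Fintype.card_units, hcardF]
  have hunitsK : Fintype.card Kˣ = q - 1 := by rw [Fintype.card_units, hcardK]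
  have hord : orderOf (α ^ N) = n := by
    rw [orderOf_pow_of_forall_mem_zpowers hα (hunitsF ▸ hN), hunitsF, hn]
  have hnN : n * N = r - 1 := by rw [hn, Nat.div_mul_cancel hN]
  have hq1 : q - 1 ∣ n * N := by
    rw [hnN, ← hcardK, ← hcardF, Module.card_eq_pow_finrank (K := K) (V := F)]
    exact Nat.sub_one_dvd_pow_sub_one _ _
  rw [Set.ncard_setOf_exists_eq_eq_one_iff, ← hord, codewordWeight_const_iff,
    traceZeroCount_const_iff, card_filter_mem_range_algebraMap, Fintype.card_zpowers, hord,
    ← Nat.card_eq_fintype_card (α := Fˣ), hunitsF, hunitsK, ← hnN]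
  exact Nat.gcd_mul_mul_eq_mul_iff (hord ▸ orderOf_pos _) (hunitsK ▸ Fintype.card_pos)
    (Nat.div_mul_cancel hq1).symm

/-- `C(r,N)` has exactly one nonzero weight iff
`N₂ = gcd(N,(r-1)/(q-1)) = 1`. -/
theorem stmt9 (p s m N q r n : ℕ) (hp : p.Prime) (hs : 0 < s) (hm : 0 < m)
    (hq : q = p ^ s) (hr : r = q ^ m) (hN : N ∣ r - 1) (hn : n = (r - 1) / N)
    (K F : Type) [Field K] [Fintype K] [Field F] [Fintype F] [Algebra K F]
    (hcardK : Fintype.card K = q) (hcardF : Fintype.card F = r)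
    (α : Fˣ) (hα : ∀ x : Fˣ, x ∈ Subgroup.zpowers α)
    (hθ : ∀ x : F, x ∈ Algebra.adjoin K {((α ^ N : Fˣ) : F)}) :
    Set.ncard {w : ℕ | ∃ β : Fˣ,
        w = codewordWeight K F ((α ^ N : Fˣ) : F) n (β : F)} = 1 ↔
      Nat.gcd N ((r - 1) / (q - 1)) = 1 :=
  stmt9_general N q r n hN hn K F hcardK hcardF α hα
end

section
/- If the irreducible cyclic code C(r,N) has exactly N₂ distinct nonzero weights (the maximal possible number), then p ≡ 1 (mod N₂). -/
open scoped Classical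

lemma card_filter_comp_equiv {n : ℕ} (P Q : Fin n → Prop) [DecidablePred P] [DecidablePred Q]
    (e : Fin n ≃ Fin n) (h : ∀ j, Q j ↔ P (e j)) :
    (Finset.univ.filter Q).card = (Finset.univ.filter P).card := by
  rw [← Fintype.card_subtype, ← Fintype.card_subtype]
  exact Fintype.card_congr (Equiv.subtypeEquiv e h)

lemma pow_mod_eq {M : Type*} [Monoid M] {θ : M} {n : ℕ} (h : θ ^ n = 1) (a : ℕ) :
    θ ^ (a % n) = θ ^ a := by
  conv_rhs => rw [← Nat.div_add_mod a n]
  rw [pow_add, pow_mul, h, one_pow, one_mul]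

lemma weight_mul_theta (K F : Type) [Field K] [Field F] [Algebra K F] (θ : F) (n : ℕ)
    [NeZero n] (hθn : θ ^ n = 1) (β : F) :
    codewordWeight K F θ n (β * θ) = codewordWeight K F θ n β := by
  unfold codewordWeight
  apply card_filter_comp_equiv _ _ (Equiv.addRight (1 : Fin n))
  intro j
  have key : θ ^ ((j + 1 : Fin n) : ℕ) = θ ^ (j : ℕ) * θ := by
    rw [Fin.val_add, Fin.val_one', pow_mod_eq hθn, pow_add, pow_mod_eq hθn, pow_one]
  have harg : β * θ * θ ^ (j : ℕ) = β * θ ^ (((Equiv.addRight (1 : Fin n)) j : Fin n) : ℕ) := by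
    simp only [Equiv.coe_addRight, key]
    rw [mul_assoc, mul_comm (θ ^ (j:ℕ)) θ, ← mul_assoc]
  rw [harg]

lemma weight_smul (K F : Type) [Field K] [Field F] [Algebra K F] (θ : F) (n : ℕ)
    (c : K) (hc : c ≠ 0) (β : F) :
    codewordWeight K F θ n (algebraMap K F c * β) = codewordWeight K F θ n β := by
  unfold codewordWeight
  congr 1
  apply Finset.filter_congr
  intro j _
  rw [mul_assoc, ← Algebra.smul_def, LinearMap.map_smul, smul_eq_mul]
  simp [hc]

lemma trace_pow_char (K F : Type) [Field K] [Field F] [Algebra K F]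
    [FiniteDimensional K F] [IsGalois K F]
    (p : ℕ) (hp : p.Prime) [CharP F p] (x : F) :
    Algebra.trace K F (x ^ p) = (Algebra.trace K F x) ^ p := by
  haveI : Fact p.Prime := ⟨hp⟩
  apply (algebraMap K F).injective
  rw [trace_eq_sum_automorphisms, map_pow (algebraMap K F) (Algebra.trace K F x) p,
    trace_eq_sum_automorphisms, sum_pow_char]
  exact Finset.sum_congr rfl fun σ _ => (map_pow σ x p)

lemma weight_frobenius (K F : Type) [Field K] [Field F] [Algebra K F]
    [FiniteDimensional K F] [IsGalois K F]
    (θ : F) (n : ℕ) [NeZero n] (hθn : θ ^ n = 1)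
    (p : ℕ) (hp : p.Prime) [CharP F p] (hpn : Nat.Coprime p n) (β : F) :
    codewordWeight K F θ n (β ^ p) = codewordWeight K F θ n β := by
  have hn0 : 0 < n := NeZero.pos n
  set σ : Fin n → Fin n := fun j => ⟨(p * (j : ℕ)) % n, Nat.mod_lt _ hn0⟩ with hσ
  have hinj : Function.Injective σ := by
    intro i j hij
    have h1 : p * (i : ℕ) ≡ p * (j : ℕ) [MOD n] := by
      simpa [Nat.ModEq, hσ] using congrArg Fin.val hij
    have h2 : (i : ℕ) ≡ (j : ℕ) [MOD n] := Nat.ModEq.cancel_left_of_coprime hpn.symm h1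
    exact Fin.ext (by simpa [Nat.ModEq, Nat.mod_eq_of_lt i.isLt, Nat.mod_eq_of_lt j.isLt] using h2)
  set e : Fin n ≃ Fin n := Equiv.ofBijective σ (Finite.injective_iff_bijective.mp hinj) with he
  unfold codewordWeight
  apply (card_filter_comp_equiv _ _ e ?_).symm
  intro j
  have hev : ((e j : Fin n) : ℕ) = (p * (j : ℕ)) % n := rfl
  have key : θ ^ ((e j : Fin n) : ℕ) = (θ ^ (j : ℕ)) ^ p := by
    rw [hev, pow_mod_eq hθn, mul_comm, pow_mul]
  rw [key, ← mul_pow, trace_pow_char K F p hp]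
  simp [pow_ne_zero_iff hp.pos.ne']

lemma exists_algebraMap_eq (K F : Type) [Field K] [Fintype K] [Field F] [Algebra K F]
    (x : F) (hx : x ^ Fintype.card K = x) : ∃ c : K, algebraMap K F c = x := by
  classical
  set q := Fintype.card K with hq
  have hq2 : 1 < q := Fintype.one_lt_card
  set P : Polynomial F := Polynomial.X ^ q - Polynomial.X with hP
  have hPne : P ≠ 0 := by
    intro h
    have h1 : P.coeff q = 0 := by rw [h]; simp
    rw [hP, Polynomial.coeff_sub, Polynomial.coeff_X_pow, Polynomial.coeff_X] at h1
    rw [if_pos rfl, if_neg (by omega : ¬ 1 = q), sub_zero] at h1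
    exact one_ne_zero h1
  have hdeg : P.natDegree ≤ q := by
    refine le_trans (Polynomial.natDegree_sub_le _ _) ?_
    simp [Polynomial.natDegree_X_pow, Polynomial.natDegree_X]
    omega
  set s : Finset F := (Finset.univ : Finset K).image (algebraMap K F) with hs
  have hscard : s.card = q := by
    rw [hs, Finset.card_image_of_injective _ (algebraMap K F).injective, Finset.card_univ]
  have hsub : s ⊆ P.roots.toFinset := by
    intro y hy
    obtain ⟨c, _, rfl⟩ := Finset.mem_image.mp hy
    rw [Multiset.mem_toFinset, Polynomial.mem_roots hPne]
    simp only [Polynomial.IsRoot, hP, Polynomial.eval_sub, Polynomial.eval_pow,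
      Polynomial.eval_X]
    rw [← map_pow, FiniteField.pow_card, sub_self]
  have hle : P.roots.toFinset.card ≤ q :=
    le_trans (Multiset.toFinset_card_le _) (le_trans (Polynomial.card_roots' P) hdeg)
  have heq : s = P.roots.toFinset :=
    Finset.eq_of_subset_of_card_le hsub (by omega)
  have hxr : x ∈ P.roots.toFinset := by
    rw [Multiset.mem_toFinset, Polynomial.mem_roots hPne]
    simp only [Polynomial.IsRoot, hP, Polynomial.eval_sub, Polynomial.eval_pow,
      Polynomial.eval_X]
    rw [hx, sub_self]
  rw [← heq] at hxr
  obtain ⟨c, _, hc⟩ := Finset.mem_image.mp hxr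
  exact ⟨c, hc⟩

set_option maxHeartbeats 1000000 in
/-- if `C(r,N)` has exactly `N₂` distinct nonzero weights (the
maximal possible number) then `p ≡ 1 (mod N₂)`. -/
theorem stmt12 (p s m N q r n N₂ : ℕ) (hp : p.Prime) (hs : 0 < s) (hm : 0 < m)
    (hq : q = p ^ s) (hr : r = q ^ m) (hN : N ∣ r - 1) (hn : n = (r - 1) / N)
    (hN₂ : N₂ = Nat.gcd N ((r - 1) / (q - 1)))
    (K F : Type) [Field K] [Fintype K] [Field F] [Fintype F] [Algebra K F]
    (hcardK : Fintype.card K = q) (hcardF : Fintype.card F = r)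
    (α : Fˣ) (hα : ∀ x : Fˣ, x ∈ Subgroup.zpowers α)
    (hθ : ∀ x : F, x ∈ Algebra.adjoin K {((α ^ N : Fˣ) : F)})
    (hmax : Set.ncard {w : ℕ | ∃ β : Fˣ,
        w = codewordWeight K F ((α ^ N : Fˣ) : F) n (β : F)} = N₂) :
    p ≡ 1 [MOD N₂] := by
  classical
  -- basic numerics
  have hq1 : 1 < q := hq ▸ Nat.one_lt_pow hs.ne' hp.one_lt
  have hr1 : 1 < r := hr ▸ Nat.one_lt_pow hm.ne' hq1
  have hrpos : 0 < r - 1 := by omega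
  -- characteristic
  haveI hcharF : CharP F p := by
    have hcast : ((p : F)) ^ (s * m) = 0 := by
      have h0 : ((Fintype.card F : ℕ) : F) = 0 := FiniteField.cast_card_eq_zero F
      rw [hcardF, hr, hq, ← pow_mul] at h0
      exact_mod_cast h0
    have hp0 : (p : F) = 0 := pow_eq_zero_iff (by positivity : 0 < s*m).ne' |>.mp hcast
    have hdvd : ringChar F ∣ p := ringChar.dvd hp0
    rcases (Nat.Prime.eq_one_or_self_of_dvd hp _ hdvd) with h1 | h1
    · exfalso
      haveI : CharP F 1 := h1 ▸ ringChar.charP F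
      exact CharP.char_ne_one F 1 rfl
    · exact h1 ▸ ringChar.charP F
  -- α ^ (r-1) = 1
  have hαpow : α ^ (r - 1) = 1 := by
    have h1 : ((α : F)) ^ (r - 1) = 1 := by
      rw [← hcardF]
      exact FiniteField.pow_card_sub_one_eq_one (α : F) (Units.ne_zero α)
    ext
    rw [Units.val_pow_eq_pow_val, h1, Units.val_one]
  -- N and n
  have hNpos : 0 < N := by
    rcases Nat.eq_zero_or_pos N with h | h
    · subst h; simp at hN; omega
    · exact h
  have hNn : N * n = r - 1 := by rw [hn]; exact Nat.mul_div_cancel' hN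
  have hnpos : 0 < n := by
    rcases Nat.eq_zero_or_pos n with h | h
    · rw [h, Nat.mul_zero] at hNn; omega
    · exact h
  haveI : NeZero n := ⟨hnpos.ne'⟩
  set θ : F := ((α ^ N : Fˣ) : F) with hθdef
  have hθval : θ = (α : F) ^ N := Units.val_pow_eq_pow_val α N
  have hθn : θ ^ n = 1 := by
    rw [hθval, ← pow_mul, ← Units.val_pow_eq_pow_val, hNn, hαpow, Units.val_one]
  -- t := (r-1)/(q-1)
  have hqdvd : q - 1 ∣ r - 1 := by
    have := Nat.sub_dvd_pow_sub_pow q 1 m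
    rwa [one_pow, ← hr] at this
  set t : ℕ := (r - 1) / (q - 1) with ht
  have htq : (q - 1) * t = r - 1 := Nat.mul_div_cancel' hqdvd
  have htpos : 0 < t := by
    rcases Nat.eq_zero_or_pos t with h | h
    · rw [h, Nat.mul_zero] at htq; omega
    · exact h
  -- α^t comes from K
  obtain ⟨c, hc⟩ : ∃ c : K, algebraMap K F c = (α : F) ^ t := by
    apply exists_algebraMap_eq
    rw [hcardK]
    have h1 : (α ^ t) ^ (q - 1) = 1 := by
      rw [← pow_mul, mul_comm, htq, hαpow]
    have h2 : (α ^ t) ^ q = α ^ t := by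
      have : q = (q - 1) + 1 := by omega
      rw [this, pow_succ, h1, one_mul]
    have h3 := congrArg (Units.val) h2
    simpa [Units.val_pow_eq_pow_val] using h3
  have hcne : c ≠ 0 := by
    intro h
    rw [h, map_zero] at hc
    exact (pow_ne_zero t (Units.ne_zero α)) hc.symm
  -- coprimality p n
  have hpn : Nat.Coprime p n := by
    have h1 : ¬ p ∣ (r - 1) := by
      intro hd
      have h2 : p ∣ r := by
        rw [hr, hq, ← pow_mul]
        exact dvd_pow_self p (by positivity : 0 < s*m).ne'
      have := Nat.dvd_sub h2 hd
      rw [Nat.sub_sub_self (by omega)] at this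
      exact hp.one_lt.ne' (Nat.dvd_one.mp this)
    have h2 : ¬ p ∣ n := fun hd => h1 (hd.trans ⟨N, by rw [← hNn]; ring⟩)
    exact (Nat.Prime.coprime_iff_not_dvd hp).mpr h2
  -- the weight function on exponents
  set W : ℕ → ℕ := fun k => codewordWeight K F θ n ((α : F) ^ k) with hW
  have hW_N : ∀ k, W (k + N) = W k := by
    intro k
    have : (α : F) ^ (k + N) = (α : F) ^ k * θ := by rw [pow_add, hθval]
    rw [hW]; simp only
    rw [this]
    exact weight_mul_theta K F θ n hθn _
  have hW_t : ∀ k, W (k + t) = W k := by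
    intro k
    have : (α : F) ^ (k + t) = algebraMap K F c * (α : F) ^ k := by
      rw [pow_add, hc, mul_comm]
    rw [hW]; simp only
    rw [this]
    exact weight_smul K F θ n c hcne _
  have hW_p : ∀ k, W (p * k) = W k := by
    intro k
    have : (α : F) ^ (p * k) = ((α : F) ^ k) ^ p := by rw [← pow_mul, mul_comm]
    rw [hW]; simp only
    rw [this]
    exact weight_frobenius K F θ n hθn p hp hpn _
  have hW_addN : ∀ k a, W (k + a * N) = W k := by
    intro k a
    induction a with
    | zero => simp
    | succ a ih => rw [Nat.succ_mul, ← Nat.add_assoc, hW_N, ih]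
  have hW_addt : ∀ k a, W (k + a * t) = W k := by
    intro k a
    induction a with
    | zero => simp
    | succ a ih => rw [Nat.succ_mul, ← Nat.add_assoc, hW_t, ih]
  -- N₂ facts
  have hN₂pos : 0 < N₂ := by
    rw [hN₂]
    exact Nat.gcd_pos_of_pos_left _ hNpos
  have hN₂t : N₂ ≤ t := hN₂ ▸ Nat.gcd_le_right _ htpos
  -- Bezout: ∃ a b, a * N = N₂ + b * t
  obtain ⟨a, b, hab⟩ : ∃ a b : ℕ, a * N = N₂ + b * t := by
    have hbez : (N₂ : ℤ) = N * Nat.gcdA N t + t * Nat.gcdB N t := by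
      rw [hN₂]; exact_mod_cast Nat.gcd_eq_gcd_ab N t
    set u := Nat.gcdA N t
    set v := Nat.gcdB N t
    have ht0 : (0 : ℤ) < t := by exact_mod_cast htpos
    set A : ℤ := u % t + t with hA
    have hA0 : 0 ≤ A := by
      have := Int.emod_nonneg u ht0.ne'
      omega
    have hAt : (t : ℤ) ≤ A := by
      have := Int.emod_nonneg u ht0.ne'
      omega
    have hdvd : (t : ℤ) ∣ A * N - N₂ := by
      have hrw : A * N - (N₂ : ℤ) = (u % t - u) * N + t * N - t * v := by
        rw [hbez]; ring
      rw [hrw]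
      have h1 : (t : ℤ) ∣ u % t - u := by
        rw [Int.emod_def]
        exact ⟨-(u / t), by ring⟩
      exact dvd_sub (dvd_add (h1.mul_right N) ⟨N, rfl⟩) ⟨v, rfl⟩
    have hN1 : (1 : ℤ) ≤ N := by exact_mod_cast hNpos
    have hge : (N₂ : ℤ) ≤ A * N := by
      have h1 : (N₂ : ℤ) ≤ t := by exact_mod_cast hN₂t
      calc (N₂ : ℤ) ≤ t := h1
        _ ≤ t * N := le_mul_of_one_le_right (le_of_lt ht0) hN1
        _ ≤ A * N := mul_le_mul_of_nonneg_right hAt (by linarith)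
    obtain ⟨B, hB⟩ := hdvd
    have hB0 : 0 ≤ B := by
      have h0 : (t : ℤ) * 0 ≤ t * B := by rw [mul_zero, ← hB]; linarith
      exact le_of_mul_le_mul_left h0 ht0
    refine ⟨A.toNat, B.toNat, ?_⟩
    have : (A.toNat * N : ℤ) = N₂ + B.toNat * t := by
      rw [Int.toNat_of_nonneg hA0, Int.toNat_of_nonneg hB0]
      linarith [hB]
    exact_mod_cast this
  have hW_N₂ : ∀ k, W (k + N₂) = W k := by
    intro k
    have h1 : W (k + N₂ + b * t) = W (k + N₂) := hW_addt (k + N₂) b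
    have h2 : k + N₂ + b * t = k + a * N := by rw [add_assoc, ← hab]
    rw [← h1, h2, hW_addN]
  have hW_addN₂ : ∀ k a, W (k + a * N₂) = W k := by
    intro k a
    induction a with
    | zero => simp
    | succ a ih => rw [Nat.succ_mul, ← Nat.add_assoc, hW_N₂, ih]
  have hW_mod : ∀ k, W k = W (k % N₂) := by
    intro k
    conv_lhs => rw [← Nat.mod_add_div' k N₂]
    exact hW_addN₂ (k % N₂) (k / N₂)
  -- the weight set equals the image of g
  set g : Fin N₂ → ℕ := fun i => W (i : ℕ) with hg
  have hSeq : {w : ℕ | ∃ β : Fˣ, w = codewordWeight K F θ n (β : F)}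
      = ↑(Finset.image g Finset.univ) := by
    ext w
    simp only [Set.mem_setOf_eq, Finset.coe_image, Finset.coe_univ, Set.image_univ,
      Set.mem_range]
    constructor
    · rintro ⟨β, rfl⟩
      obtain ⟨k, hk⟩ := mem_powers_iff_mem_zpowers.mpr (hα β)
      refine ⟨⟨k % N₂, Nat.mod_lt _ hN₂pos⟩, ?_⟩
      have hβ : (β : F) = (α : F) ^ k := by
        rw [← hk, Units.val_pow_eq_pow_val]
      show W (k % N₂) = codewordWeight K F θ n (β : F)
      rw [hβ]
      exact (hW_mod k).symm
    · rintro ⟨i, rfl⟩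
      refine ⟨α ^ (i : ℕ), ?_⟩
      show codewordWeight K F θ n ((α : F) ^ (i : ℕ))
        = codewordWeight K F θ n ((α ^ (i : ℕ) : Fˣ) : F)
      rw [Units.val_pow_eq_pow_val]
  rw [hSeq, Set.ncard_coe_finset] at hmax
  have hginj : Set.InjOn g ↑(Finset.univ : Finset (Fin N₂)) := by
    apply Finset.card_image_iff.mp
    rw [hmax, Finset.card_univ, Fintype.card_fin]
  -- conclude
  rcases Nat.lt_or_ge N₂ 2 with h2 | h2
  · have hone : N₂ = 1 := by omega
    rw [hone]
    exact Nat.modEq_one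
  · have hkey : g ⟨p % N₂, Nat.mod_lt _ hN₂pos⟩ = g ⟨1, by omega⟩ := by
      show W (p % N₂) = W 1
      rw [← hW_mod]
      have h3 := hW_p 1
      rwa [Nat.mul_one] at h3
    have := hginj (Finset.mem_coe.mpr (Finset.mem_univ _))
      (Finset.mem_coe.mpr (Finset.mem_univ _)) hkey
    have hval : p % N₂ = 1 := by
      have := congrArg Fin.val this
      simpa using this
    show p % N₂ = 1 % N₂
    rw [hval, Nat.mod_eq_of_lt (by omega : 1 < N₂)]
end

section
/- If N₂ = 1, then C(r,N) is an [(r-1)/N, m] code over GF(q) whose every nonzero codeword has weight q^{m-1}(q-1)/N. -/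
/-!
Write `θ = α ^ N`. The multiplication map `GF(q)ˣ × ⟨θ⟩ → GF(r)ˣ` is a group homomorphism whose
image contains `θ` and the norm `α ^ ((r-1)/(q-1))` of `α`; as these exponents are coprime, it is
onto, so all its fibres have the same size `k`, and `N * k = q - 1` by counting. Since
`Tr(β c x) = c Tr(β x)` for `c ∈ GF(q)`, counting the pairs `(c, θʲ)` with `Tr(β c θʲ) ≠ 0` in two
ways gives `(q-1) wt(c(β)) = k · #{x ∈ GF(r)ˣ | Tr(β x) ≠ 0} = k (q-1) q^(m-1)`, the last because
`x ↦ Tr(β x)` is a nonzero linear form. Nonzero codewords thus have positive weight, so `β ↦ c(β)`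
is injective.
-/

open scoped Classical

open Finset Fintype

theorem Subgroup.mem_of_pow_mem_of_coprime {G : Type*} [Group G] {S : Subgroup G} {x : G}
    {a b : ℕ} (hab : a.Coprime b) (ha : x ^ a ∈ S) (hb : x ^ b ∈ S) : x ∈ S := by
  have hx : x = (x ^ a) ^ a.gcdA b * (x ^ b) ^ a.gcdB b := by
    rw [← zpow_natCast, ← zpow_natCast, ← zpow_mul, ← zpow_mul, ← zpow_add,
      ← Nat.gcd_eq_gcd_ab, hab, Nat.cast_one, zpow_one]
  rw [hx]
  exact S.mul_mem (S.zpow_mem ha _) (S.zpow_mem hb _)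

@[to_additive]
theorem MonoidHom.card_filter_comp_of_surjective {G M : Type*} [Group G] [Fintype G] [Group M]
    [Fintype M] [DecidableEq M] (f : G →* M) (hf : Function.Surjective f) (P : M → Prop)
    [DecidablePred P] :
    #{g | P (f g)} = #{y | P y} * #{g | f g = 1} := by
  rw [card_eq_sum_card_fiberwise (f := f) (t := {y | P y}) fun g hg => by simpa using hg]
  refine sum_const_nat fun y hy => ?_
  rw [filter_filter]
  calc #{g | P (f g) ∧ f g = y} = #{g | f g = y} := by
        congr 1; ext g; simp only [mem_filter, mem_univ, true_and] at hy ⊢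
        exact ⟨And.right, fun h => ⟨h ▸ hy, h⟩⟩
    _ = #{g | f g = 1} := MonoidHom.card_fiber_eq_of_mem_range f (hf y) ⟨1, map_one f⟩

theorem card_filter_units_eq {F : Type*} [GroupWithZero F] [Fintype F] {P : F → Prop}
    [DecidablePred P] (h0 : ¬ P 0) : #{x : Fˣ | P x} = #{x : F | P x} := by
  refine card_bij (fun x _ => (x : F)) (by simp) (fun _ _ _ _ => Units.ext) fun y hy => ?_
  have hy0 : y ≠ 0 := by rintro rfl; simp_all
  exact ⟨Units.mk0 y hy0, by simpa using hy, rfl⟩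

theorem codeword_injective_of_codewordWeight_ne_zero {K F : Type} [Field K] [Field F]
    [Algebra K F] {θ : F} {n : ℕ} (h : ∀ β : Fˣ, codewordWeight K F θ n β ≠ 0) :
    Function.Injective fun β : F => fun j : Fin n => Algebra.trace K F (β * θ ^ (j : ℕ)) := by
  intro β₁ β₂ hβ
  by_contra hne
  apply h (Units.mk0 _ (sub_ne_zero.mpr hne))
  rw [codewordWeight, card_eq_zero, filter_eq_empty_iff]
  intro j _
  simp [sub_mul, congrFun hβ j]

theorem codewordWeight_orderOf {K F : Type} [Field K] [Field F] [Fintype F] [Algebra K F]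
    (θ : Fˣ) (β : F) :
    codewordWeight K F θ (orderOf θ) β =
      #{h : Subgroup.zpowers θ | Algebra.trace K F (β * (h : Fˣ)) ≠ 0} :=
  card_equiv (finEquivZPowers (isOfFinOrder_of_finite θ)) fun j => by
    simp [finEquivZPowers_apply]

section FiniteField

variable {K F : Type} [Field K] [Fintype K] [Field F] [Fintype F] [Algebra K F]

theorem card_mul_card_filter_trace_mul_ne_zero {β : F} (hβ : β ≠ 0) :
    card K * #{x : F | Algebra.trace K F (β * x) ≠ 0} = (card K - 1) * card F := by
  let f : F →+ K := (Algebra.trace K F).toAddMonoidHom.comp (AddMonoidHom.mulLeft β)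
  have hf : Function.Surjective f :=
    (Algebra.trace_surjective K F).comp (mulLeft_bijective₀ β hβ).surjective
  have hcard := f.card_filter_comp_of_surjective hf fun _ => True
  have hne := f.card_filter_comp_of_surjective hf (· ≠ 0)
  simp only [filter_true, card_univ] at hcard
  rw [show #{y : K | y ≠ 0} = card K - 1 by simp [filter_ne']] at hne
  change #{x : F | Algebra.trace K F (β * x) ≠ 0} = _ at hne
  rw [hne, hcard]
  ring

theorem card_mul_card_filter_units_trace_mul_ne_zero {β : F} (hβ : β ≠ 0) :
    card K * #{x : Fˣ | Algebra.trace K F (β * x) ≠ 0} = (card K - 1) * card F := by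
  rw [card_filter_units_eq (P := fun x : F => Algebra.trace K F (β * x) ≠ 0) (by simp),
    card_mul_card_filter_trace_mul_ne_zero hβ]

variable (K) in
noncomputable def unitsMulZPowers (θ : Fˣ) : Kˣ × Subgroup.zpowers θ →* Fˣ :=
  (Units.map (algebraMap K F).toMonoidHom).coprod (Subgroup.zpowers θ).subtype

theorem unitsMulZPowers_surjective {α : Fˣ} (hα : ∀ x, x ∈ Subgroup.zpowers α) {N : ℕ}
    (hN : N.Coprime ((card F - 1) / (card K - 1))) :
    Function.Surjective (unitsMulZPowers K (α ^ N)) := by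
  have hnorm : unitsMulZPowers K (α ^ N) (Units.map (Algebra.norm K) α, 1) =
      α ^ ((card F - 1) / (card K - 1)) := by
    ext
    simp [unitsMulZPowers, FiniteField.algebraMap_norm_eq_pow]
  have hθ : unitsMulZPowers K (α ^ N) (1, ⟨α ^ N, Subgroup.mem_zpowers _⟩) = α ^ N := by
    simp [unitsMulZPowers]
  have hα_mem : α ∈ (unitsMulZPowers K (α ^ N)).range :=
    Subgroup.mem_of_pow_mem_of_coprime hN ⟨_, hθ⟩ ⟨_, hnorm⟩
  rw [← MonoidHom.range_eq_top, eq_top_iff]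
  exact fun x _ => (Subgroup.zpowers_le.mpr hα_mem) (hα x)

theorem card_units_mul_orderOf {θ : Fˣ} (hψ : Function.Surjective (unitsMulZPowers K θ)) :
    (card K - 1) * orderOf θ = (card F - 1) * #{g | unitsMulZPowers K θ g = 1} := by
  simpa [Fintype.card_units, Fintype.card_zpowers] using
    (unitsMulZPowers K θ).card_filter_comp_of_surjective hψ fun _ => True

theorem card_units_mul_codewordWeight_orderOf {θ : Fˣ}
    (hψ : Function.Surjective (unitsMulZPowers K θ)) (β : F) :
    (card K - 1) * codewordWeight K F θ (orderOf θ) β =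
      #{x : Fˣ | Algebra.trace K F (β * x) ≠ 0} * #{g | unitsMulZPowers K θ g = 1} := by
  have htrace : ∀ g, Algebra.trace K F (β * (unitsMulZPowers K θ g : F)) =
      g.1 * Algebra.trace K F (β * (g.2 : Fˣ)) := fun g => by
    simp only [unitsMulZPowers, MonoidHom.coprod_apply, Units.val_mul, Units.coe_map,
      RingHom.toMonoidHom_eq_coe, MonoidHom.coe_coe, Subgroup.coe_subtype]
    rw [mul_left_comm, ← Algebra.smul_def, map_smul, smul_eq_mul]
  rw [codewordWeight_orderOf, ← (unitsMulZPowers K θ).card_filter_comp_of_surjective hψ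
    fun x : Fˣ => Algebra.trace K F (β * x) ≠ 0]
  simp only [htrace, ne_eq, mul_eq_zero, Units.ne_zero, false_or]
  rw [← Fintype.card_units, ← card_univ (α := Kˣ), ← card_product]
  congr 1
  ext
  simp

theorem card_mul_card_units_mul_codewordWeight_orderOf {θ : Fˣ}
    (hψ : Function.Surjective (unitsMulZPowers K θ)) {β : F} (hβ : β ≠ 0) :
    card K * (card F - 1) * codewordWeight K F θ (orderOf θ) β =
      (card K - 1) * card F * orderOf θ := by
  have hq : 1 < card K := Fintype.one_lt_card
  set k := #{g | unitsMulZPowers K θ g = 1}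
  set S := #{x : Fˣ | Algebra.trace K F (β * x) ≠ 0}
  have hfiber := card_units_mul_orderOf hψ
  have hcount := card_units_mul_codewordWeight_orderOf hψ β
  have htrace := card_mul_card_filter_units_trace_mul_ne_zero (K := K) hβ
  refine Nat.eq_of_mul_eq_mul_left (Nat.sub_pos_of_lt hq) ?_
  calc (card K - 1) * (card K * (card F - 1) * codewordWeight K F θ (orderOf θ) β)
      = card K * (card F - 1) * (S * k) := by rw [← hcount]; ring
    _ = card K * S * ((card F - 1) * k) := by ring
    _ = (card K - 1) * ((card K - 1) * card F * orderOf θ) := by rw [htrace, ← hfiber]; ring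

end FiniteField

theorem stmt16_general (m N q r n : ℕ) (hr : r = q ^ m) (hN : N ∣ r - 1) (hn : n = (r - 1) / N)
    (hN₂ : Nat.gcd N ((r - 1) / (q - 1)) = 1)
    (K F : Type) [Field K] [Fintype K] [Field F] [Fintype F] [Algebra K F]
    (hcardK : Fintype.card K = q) (hcardF : Fintype.card F = r)
    (α : Fˣ) (hα : ∀ x : Fˣ, x ∈ Subgroup.zpowers α) :
    Function.Injective (fun β : F => fun j : Fin n =>
        Algebra.trace K F (β * ((α ^ N : Fˣ) : F) ^ (j : ℕ))) ∧
      ∀ β : Fˣ,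
        N * codewordWeight K F ((α ^ N : Fˣ) : F) n (β : F) =
          q ^ (m - 1) * (q - 1) := by
  subst hcardK hcardF
  have hq : 1 < card K := Fintype.one_lt_card
  obtain ⟨m, rfl⟩ : ∃ m', m = m' + 1 :=
    Nat.exists_eq_succ_of_ne_zero fun hm =>
      Fintype.one_lt_card.ne' (by rw [hr, hm, pow_zero])
  have horder : orderOf (α ^ N) = n := by
    rw [orderOf_pow, orderOf_eq_card_of_forall_mem_zpowers hα, Nat.card_eq_fintype_card,
      Fintype.card_units, Nat.gcd_eq_right hN, hn]
  subst horder
  have hNn : N * orderOf (α ^ N) = card F - 1 := by rw [hn, Nat.mul_div_cancel' hN]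
  have hweight : ∀ β : Fˣ, N * codewordWeight K F ((α ^ N : Fˣ) : F) (orderOf (α ^ N)) β =
      card K ^ (m + 1 - 1) * (card K - 1) := by
    intro β
    have h := card_mul_card_units_mul_codewordWeight_orderOf
      (unitsMulZPowers_surjective hα hN₂) β.ne_zero
    rw [← hNn, hr, pow_succ] at h
    rw [Nat.add_sub_cancel]
    exact Nat.eq_of_mul_eq_mul_left (Nat.mul_pos (by omega : 0 < card K) (orderOf_pos _))
      (by linarith)
  refine ⟨codeword_injective_of_codewordWeight_ne_zero fun β hβ => ?_, hweight⟩
  have := hweight β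
  rw [hβ, mul_zero] at this
  exact (Nat.mul_pos (by positivity) (Nat.sub_pos_of_lt hq)).ne this

/-- if `N₂ = 1` then `C(r,N)` is an `[(r-1)/N, m]` code (the map
`β ↦ c(β)` is injective, so the code has `q^m` codewords, i.e. dimension `m`)
and every nonzero codeword has weight `q^{m-1}(q-1)/N`. -/
theorem stmt16 (p s m N q r n : ℕ) (hp : p.Prime) (hs : 0 < s) (hm : 0 < m)
    (hq : q = p ^ s) (hr : r = q ^ m) (hN : N ∣ r - 1) (hn : n = (r - 1) / N)
    (hN₂ : Nat.gcd N ((r - 1) / (q - 1)) = 1)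
    (K F : Type) [Field K] [Fintype K] [Field F] [Fintype F] [Algebra K F]
    (hcardK : Fintype.card K = q) (hcardF : Fintype.card F = r)
    (α : Fˣ) (hα : ∀ x : Fˣ, x ∈ Subgroup.zpowers α)
    (hθ : ∀ x : F, x ∈ Algebra.adjoin K {((α ^ N : Fˣ) : F)}) :
    Function.Injective (fun β : F => fun j : Fin n =>
        Algebra.trace K F (β * ((α ^ N : Fˣ) : F) ^ (j : ℕ))) ∧
      ∀ β : Fˣ,
        N * codewordWeight K F ((α ^ N : Fˣ) : F) n (β : F) =
          q ^ (m - 1) * (q - 1) :=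
  stmt16_general m N q r n hr hN hn hN₂ K F hcardK hcardF α hα
end
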